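/- arXiv:2604.21818 — 7 statements merged into one kernel-verified Lean document; each statement's English description precedes it below -/
import Mathlib

section
/- Suppose S_{A^e}*T = A*A^D, that A^π*S is r-nilpotent, i.e. (A^π*S)^r = 0, and that A^e*Y*A^π*S = 0. Then S has a Drazin inverse, given by S^D = −Σ_{i=0}^{r−2} S^i*A^π*Y*T^{i+2}*(1 − T*Y*A^π) + T − T^2*Y*A^π. -/
open Matrix Finset

/-- `X` is a Drazin inverse of the square matrix `M`: `X*M*X = X`, `M*X = X*M`,
and `M^(l+1)*X = M^l` for some natural number `l`. -/
def IsDrazinInverse {n : Type*} [Fintype n] [DecidableEq n]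
    (M X : Matrix n n ℂ) : Prop :=
  X * M * X = X ∧ M * X = X * M ∧ ∃ l : ℕ, M ^ (l + 1) * X = M ^ l

private lemma drazin_aux {n : Type*} [Fintype n] [DecidableEq n]
    (S T e : Matrix n n ℂ)
    (he : e * e = e) (hTe : T * e = T) (heT : e * T = T)
    (hUT : e * S * e * T = e)
    (hb : e * S * ((1 - e) * S) = 0)
    (r : ℕ) (hnil : ((1 - e) * S) ^ r = 0) :
    IsDrazinInverse S
      ((∑ i ∈ Finset.range (r - 1),
          S ^ i * ((1 - e) * S) * T ^ (i + 2) * (1 + T * S * (1 - e)))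
        + T + T ^ 2 * S * (1 - e)) := by
  rcases Nat.eq_zero_or_pos r with hr | hr
  · subst hr
    have h10 : (0 : Matrix n n ℂ) = 1 := by simpa using hnil.symm
    have : Subsingleton (Matrix n n ℂ) := subsingleton_of_zero_eq_one h10
    exact ⟨Subsingleton.elim _ _, Subsingleton.elim _ _, 0, Subsingleton.elim _ _⟩
  obtain ⟨m, rfl⟩ : ∃ m, r = m + 1 := ⟨r - 1, (Nat.succ_pred_eq_of_pos hr).symm⟩
  simp only [Nat.add_sub_cancel]
  set J : Matrix n n ℂ := 1 - e with hJ
  set N : Matrix n n ℂ := J * S with hN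
  set β : Matrix n n ℂ := T * S * J with hβ
  clear_value J N β
  -- basic idempotent facts
  have heJ : e * J = 0 := by rw [hJ, mul_sub, mul_one, he, sub_self]
  have hJe : J * e = 0 := by rw [hJ, sub_mul, one_mul, he, sub_self]
  have hJJ : J * J = J := by
    rw [hJ, sub_mul, one_mul, mul_sub, mul_one, he]; abel
  have heJ1 : e + J = 1 := by rw [hJ]; abel
  have hTJ : T * J = 0 := by rw [hJ, mul_sub, mul_one, hTe, sub_self]
  have hJT : J * T = 0 := by rw [hJ, sub_mul, one_mul, heT, sub_self]
  have heN : e * N = 0 := by rw [hN, ← mul_assoc, heJ, zero_mul]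
  have hJN : J * N = N := by rw [hN, ← mul_assoc, hJJ]
  have hTN : T * N = 0 := by rw [hN, ← mul_assoc, hTJ, zero_mul]
  -- T is a two-sided corner inverse of e*S*e
  have heST : e * S * T = e := by
    conv_lhs => rw [← heT]
    rw [← mul_assoc]
    exact hUT
  have hTU : T * (e * S * e) = e := by
    have h2 : e * S * e * J = 0 := by rw [mul_assoc (e * S) e J, heJ, mul_zero]
    have h4 : J * (e * S * e) = 0 := by
      rw [← mul_assoc, ← mul_assoc, hJe, zero_mul, zero_mul]
    have h1 : (e * S * e + J) * (T + J) = 1 := by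
      rw [add_mul, mul_add, mul_add, hUT, h2, hJT, hJJ, add_zero, zero_add, heJ1]
    have h3 : (T + J) * (e * S * e + J) = 1 := mul_eq_one_comm.mp h1
    have h5 : T * (e * S * e) + J = 1 := by
      rw [add_mul, mul_add, mul_add, hTJ, h4, hJJ] at h3
      calc T * (e * S * e) + J = T * (e * S * e) + 0 + (0 + J) := by abel
        _ = 1 := h3
    have h6 : T * (e * S * e) + J = e + J := by rw [h5, heJ1]
    exact add_right_cancel h6
  have hTSe : T * S * e = e := by
    conv_lhs => rw [← hTe]
    rw [mul_assoc T e S, mul_assoc T (e * S) e]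
    exact hTU
  -- structural facts
  have hSN : S * N = N * N := by
    have h0 : e * (S * N) = 0 := by rw [← mul_assoc]; exact hb
    calc S * N = (e + J) * (S * N) := by rw [heJ1, one_mul]
      _ = e * (S * N) + J * (S * N) := add_mul _ _ _
      _ = N * N := by rw [h0, zero_add, ← mul_assoc, ← hN]
  have hSpowN : ∀ i : ℕ, S ^ i * N = N ^ (i + 1) := by
    intro i
    induction i with
    | zero => simp
    | succ k ih =>
      calc S ^ (k + 1) * N = S * (S ^ k * N) := by rw [pow_succ', mul_assoc]
        _ = S * (N * N ^ k) := by rw [ih, pow_succ']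
        _ = (S * N) * N ^ k := by rw [mul_assoc]
        _ = N * (N * N ^ k) := by rw [hSN, mul_assoc]
        _ = N ^ (k + 1 + 1) := by rw [← pow_succ', ← pow_succ']
  have hST2 : S * T = e + N * T := by
    calc S * T = (e + J) * (S * T) := by rw [heJ1, one_mul]
      _ = e * (S * T) + J * (S * T) := add_mul _ _ _
      _ = e + N * T := by rw [← mul_assoc, heST, ← mul_assoc, ← hN]
  have hTS2 : T * S = e + β := by
    calc T * S = T * S * (e + J) := by rw [heJ1, mul_one]
      _ = T * S * e + T * S * J := mul_add _ _ _
      _ = e + β := by rw [hTSe, ← hβ]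
  have hβS : β * S = 0 := by
    calc β * S = T * S * (J * S) := by rw [hβ, mul_assoc]
      _ = T * (S * N) := by rw [← hN, mul_assoc]
      _ = 0 := by rw [hSN, ← mul_assoc, hTN, zero_mul]
  have hβT : β * T = 0 := by rw [hβ, mul_assoc (T * S) J T, hJT, mul_zero]
  have hβN : β * N = 0 := by
    calc β * N = T * S * (J * N) := by rw [hβ, mul_assoc]
      _ = T * (S * N) := by rw [hJN, mul_assoc]
      _ = 0 := by rw [hSN, ← mul_assoc, hTN, zero_mul]
  have hJβ : J * β = 0 := by
    rw [hβ, ← mul_assoc, ← mul_assoc, hJT, zero_mul, zero_mul]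
  have heβ : e * β = β := by
    rw [hβ, ← mul_assoc, ← mul_assoc, heT]
  have hββ : β * β = 0 := by
    nth_rewrite 1 [hβ]
    rw [mul_assoc, hJβ, mul_zero]
  -- powers
  have hTpow_e : ∀ k : ℕ, T ^ (k + 1) * e = T ^ (k + 1) := fun k => by
    rw [pow_succ, mul_assoc, hTe]
  have hTNpow : ∀ i : ℕ, T * N ^ (i + 1) = 0 := fun i => by
    rw [pow_succ', ← mul_assoc, hTN, zero_mul]
  have heNpow : ∀ i : ℕ, e * N ^ (i + 1) = 0 := fun i => by
    rw [pow_succ', ← mul_assoc, heN, zero_mul]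
  have hβNpow : ∀ i : ℕ, β * N ^ (i + 1) = 0 := fun i => by
    rw [pow_succ', ← mul_assoc, hβN, zero_mul]
  have hSNpow : ∀ i : ℕ, S * N ^ (i + 1) = N ^ (i + 2) := fun i => by
    rw [pow_succ' N i, ← mul_assoc, hSN, mul_assoc, ← pow_succ', ← pow_succ']
  have hSkNpow : ∀ k i : ℕ, S ^ k * N ^ (i + 1) = N ^ (k + i + 1) := by
    intro k i
    rw [pow_succ' N i, ← mul_assoc, hSpowN k, ← pow_add]
    congr 1
    omega
  -- the two sums
  set F : Matrix n n ℂ := ∑ i ∈ Finset.range m, N ^ (i + 1) * T ^ (i + 2) with hF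
  set Q : Matrix n n ℂ := ∑ i ∈ Finset.range m, N ^ (i + 1) * T ^ (i + 1) with hQ
  clear_value F Q
  have heF : e * F = 0 := by
    rw [hF, Finset.mul_sum]
    exact Finset.sum_eq_zero fun i _ => by rw [← mul_assoc, heNpow, zero_mul]
  have hTF : T * F = 0 := by
    rw [hF, Finset.mul_sum]
    exact Finset.sum_eq_zero fun i _ => by rw [← mul_assoc, hTNpow, zero_mul]
  have hβF : β * F = 0 := by
    rw [hF, Finset.mul_sum]
    exact Finset.sum_eq_zero fun i _ => by rw [← mul_assoc, hβNpow, zero_mul]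
  have hTkF : ∀ k : ℕ, T ^ (k + 1) * F = 0 := fun k => by
    rw [pow_succ, mul_assoc, hTF, mul_zero]
  have hQF : Q * F = 0 := by
    rw [hQ, Finset.sum_mul]
    exact Finset.sum_eq_zero fun i _ => by rw [mul_assoc, hTkF, mul_zero]
  have hQT : Q * T = F := by
    rw [hQ, hF, Finset.sum_mul]
    exact Finset.sum_congr rfl fun i _ => by rw [mul_assoc, ← pow_succ]
  have hSF : S * F = ∑ i ∈ Finset.range m, N ^ (i + 2) * T ^ (i + 2) := by
    rw [hF, Finset.mul_sum]
    exact Finset.sum_congr rfl fun i _ => by rw [← mul_assoc, hSNpow]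
  have hFS : F * S = Q + Q * β := by
    rw [hF, Finset.sum_mul]
    have hterm : ∀ i ∈ Finset.range m,
        N ^ (i + 1) * T ^ (i + 2) * S
          = N ^ (i + 1) * T ^ (i + 1) + N ^ (i + 1) * T ^ (i + 1) * β := by
      intro i _
      calc N ^ (i + 1) * T ^ (i + 2) * S
          = N ^ (i + 1) * T ^ (i + 1) * (T * S) := by
            rw [pow_succ T (i + 1), ← mul_assoc (N ^ (i + 1)) (T ^ (i + 1)) T,
              mul_assoc (N ^ (i + 1) * T ^ (i + 1)) T S]
        _ = N ^ (i + 1) * T ^ (i + 1) * e + N ^ (i + 1) * T ^ (i + 1) * β := by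
            rw [hTS2, mul_add]
        _ = N ^ (i + 1) * T ^ (i + 1) + N ^ (i + 1) * T ^ (i + 1) * β := by
            rw [mul_assoc (N ^ (i + 1)) (T ^ (i + 1)) e, hTpow_e]
    rw [Finset.sum_congr rfl hterm, Finset.sum_add_distrib, ← Finset.sum_mul, ← hQ]
  -- telescoping
  have hmnil : N ^ (m + 1) = 0 := hnil
  have htel : S * F + N * T = Q := by
    have h1 := Finset.sum_range_succ' (fun i => N ^ (i + 1) * T ^ (i + 1)) m
    have h2 := Finset.sum_range_succ (fun i => N ^ (i + 1) * T ^ (i + 1)) m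
    simp only [zero_add, pow_one] at h1
    rw [hmnil, zero_mul, add_zero] at h2
    rw [hSF, hQ, ← h2, h1]
  have hSFQ : S * F = Q - N * T := by rw [← htel]; abel
  -- the candidate inverse
  set X : Matrix n n ℂ := F + F * β + T + T * β with hX
  clear_value X
  have hXgoal : (∑ i ∈ Finset.range m,
      S ^ i * N * T ^ (i + 2) * (1 + β)) + T + T ^ 2 * S * J = X := by
    rw [hX]
    have hsum : ∀ i ∈ Finset.range m,
        S ^ i * N * T ^ (i + 2) * (1 + β)
          = N ^ (i + 1) * T ^ (i + 2) + N ^ (i + 1) * T ^ (i + 2) * β := by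
      intro i _
      rw [hSpowN, mul_add, mul_one]
    rw [Finset.sum_congr rfl hsum, Finset.sum_add_distrib, ← Finset.sum_mul, ← hF]
    have hT2 : T ^ 2 * S * J = T * β := by
      rw [hβ, pow_two, mul_assoc T T S, mul_assoc T (T * S) J]
    rw [hT2]
  rw [hXgoal]
  have hSX : S * X = e + β + Q + Q * β := by
    rw [hX, mul_add, mul_add, mul_add, ← mul_assoc S F β, ← mul_assoc S T β,
      hSFQ, hST2, sub_mul, add_mul, heβ]
    abel
  have hXS : X * S = e + β + Q + Q * β := by
    rw [hX, add_mul, add_mul, add_mul, mul_assoc F β S, mul_assoc T β S, hβS,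
      mul_zero, mul_zero, hFS, hTS2]
    abel
  refine ⟨?_, by rw [hSX, hXS], m + 1, ?_⟩
  · -- X * S * X = X
    rw [hXS]
    have h1 : (e + β + Q + Q * β) * F = 0 := by
      rw [add_mul, add_mul, add_mul, heF, hβF, hQF, mul_assoc, hβF, mul_zero]
      abel
    have h3 : (e + β + Q + Q * β) * T = T + F := by
      rw [add_mul, add_mul, add_mul, heT, hβT, hQT, mul_assoc, hβT, mul_zero]
      abel
    have h2 : (e + β + Q + Q * β) * (F * β) = 0 := by
      rw [← mul_assoc, h1, zero_mul]
    have h4 : (e + β + Q + Q * β) * (T * β) = (T + F) * β := by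
      rw [← mul_assoc, h3]
    nth_rewrite 1 [hX]
    rw [mul_add, mul_add, mul_add, h1, h2, h3, h4, add_mul, hX]
    abel
  · -- S ^ (m + 2) * X = S ^ (m + 1)
    have hSrQ : S ^ (m + 1) * Q = 0 := by
      rw [hQ, Finset.mul_sum]
      refine Finset.sum_eq_zero fun i _ => ?_
      rw [← mul_assoc, hSkNpow]
      have hz : N ^ (m + 1 + i + 1) = 0 := by
        have hh : m + 1 + i + 1 = (m + 1) + (i + 1) := by omega
        rw [hh, pow_add, hmnil, zero_mul]
      rw [hz, zero_mul]
    have h6 : e * S * β = e * S * J := by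
      rw [hβ, mul_assoc T S J, ← mul_assoc (e * S) T (S * J), heST, ← mul_assoc]
    have hkey : e * (S * (J - β)) = 0 := by
      rw [mul_sub, mul_sub, ← mul_assoc, ← mul_assoc, h6, sub_self]
    have hstep : S * (J - β) = N * (J - β) := by
      calc S * (J - β) = (e + J) * (S * (J - β)) := by rw [heJ1, one_mul]
        _ = e * (S * (J - β)) + J * (S * (J - β)) := add_mul _ _ _
        _ = N * (J - β) := by rw [hkey, zero_add, ← mul_assoc, ← hN]
    have hnilJβ : S ^ (m + 1) * (J - β) = 0 := by
      calc S ^ (m + 1) * (J - β) = S ^ m * (S * (J - β)) := by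
            rw [pow_succ, mul_assoc]
        _ = (S ^ m * N) * (J - β) := by rw [hstep, mul_assoc]
        _ = 0 := by rw [hSpowN, hmnil, zero_mul]
    have heβ1 : e + β = 1 - (J - β) := by rw [hJ]; abel
    calc S ^ (m + 1 + 1) * X = S ^ (m + 1) * (S * X) := by rw [pow_succ, mul_assoc]
      _ = S ^ (m + 1) * (e + β) + S ^ (m + 1) * Q
          + S ^ (m + 1) * Q * β := by
          rw [hSX, mul_add, mul_add, ← mul_assoc (S ^ (m + 1)) Q β]
      _ = S ^ (m + 1) := by
          rw [hSrQ, zero_mul, add_zero, add_zero, heβ1, mul_sub, mul_one,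
            hnilJβ, sub_zero]

theorem stmt11
    {p q : Type*} [Fintype p] [DecidableEq p] [Fintype q] [DecidableEq q]
    (A AD : Matrix p p ℂ) (D DD : Matrix q q ℂ)
    (B : Matrix q p ℂ) (C : Matrix p q ℂ)
    (hA : IsDrazinInverse A AD) (hD : IsDrazinInverse D DD)
    (Y S Ae Aπ SAe : Matrix p p ℂ)
    (hY : Y = C * DD * B) (hS : S = A - Y)
    (hAe : Ae = A * AD) (hAπ : Aπ = 1 - A * AD)
    (hSAe : SAe = Ae * S * Ae)
    (Z ZD : Matrix q q ℂ) (hZdef : Z = D - B * AD * C)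
    (hZ : IsDrazinInverse Z ZD)
    (K : Matrix p q ℂ) (H : Matrix q p ℂ)
    (hK : K = AD * C) (hH : H = B * AD)
    (T : Matrix p p ℂ) (hT : T = AD + K * ZD * H)
    (hST : SAe * T = A * AD)
    (r : ℕ) (hnil : (Aπ * S) ^ r = 0)
    (hcond : Ae * Y * Aπ * S = 0) :
    IsDrazinInverse S
      (-(∑ i ∈ Finset.range (r - 1),
          S ^ i * Aπ * Y * T ^ (i + 2) * (1 - T * Y * Aπ))
        + T - T ^ 2 * Y * Aπ) := by
  obtain ⟨hA1, hA2, lA, hA3⟩ := hA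
  subst hAπ
  simp only [← hAe] at hnil hcond ⊢
  -- basic facts about Ae
  have he : Ae * Ae = Ae := by rw [hAe, mul_assoc, ← mul_assoc AD A AD, hA1]
  have heA_comm : Ae * A = A * Ae := by rw [hAe, mul_assoc, ← hA2]
  have hADe : AD * Ae = AD := by rw [hAe, ← mul_assoc, hA1]
  have heAD : Ae * AD = AD := by rw [hAe, hA2, hA1]
  have hHe : H * Ae = H := by rw [hH, Matrix.mul_assoc, hADe]
  have heK : Ae * K = K := by rw [hK, ← Matrix.mul_assoc, heAD]
  have hTe : T * Ae = T := by
    rw [hT, add_mul, hADe, Matrix.mul_assoc (K * ZD) H Ae, hHe]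
  have heT : Ae * T = T := by
    rw [hT, mul_add, heAD, ← Matrix.mul_assoc, ← Matrix.mul_assoc, heK]
  have hUT : Ae * S * Ae * T = Ae := by
    rw [← hSAe, hST, ← hAe]
  have heπ : Ae * (1 - Ae) = 0 := by rw [mul_sub, mul_one, he, sub_self]
  have hπe0 : (1 - Ae) * Ae = 0 := by rw [sub_mul, one_mul, he, sub_self]
  have h1 : Ae * A * (1 - Ae) = 0 := by rw [heA_comm, mul_assoc, heπ, mul_zero]
  have h2 : Ae * S * (1 - Ae) = -(Ae * Y * (1 - Ae)) := by
    rw [hS, mul_sub Ae A Y, sub_mul (Ae * A) (Ae * Y) (1 - Ae), h1, zero_sub]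
  have hb : Ae * S * ((1 - Ae) * S) = 0 := by
    rw [← mul_assoc, h2, neg_mul, hcond, neg_zero]
  have key := drazin_aux S T Ae he hTe heT hUT hb r hnil
  -- convert the expression
  have hπA : (1 - Ae) * A = A * (1 - Ae) := by
    rw [sub_mul, one_mul, heA_comm, mul_sub, mul_one]
  have hπAe : (1 - Ae) * A * Ae = 0 := by rw [hπA, mul_assoc, hπe0, mul_zero]
  have hYe : (1 - Ae) * Y * Ae = -((1 - Ae) * S * Ae) := by
    rw [hS, mul_sub (1 - Ae) A Y, sub_mul ((1 - Ae) * A) ((1 - Ae) * Y) Ae, hπAe,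
      zero_sub, neg_neg]
  have heYπ : Ae * Y * (1 - Ae) = -(Ae * S * (1 - Ae)) := by rw [h2, neg_neg]
  have hKey1 : ∀ k : ℕ, Ae * T ^ (k + 1) = T ^ (k + 1) := fun k => by
    rw [pow_succ', ← mul_assoc, heT]
  have hTYπ : T * Y * (1 - Ae) = -(T * S * (1 - Ae)) := by
    conv_lhs => rw [← hTe]
    rw [mul_assoc T Ae Y, mul_assoc T (Ae * Y) (1 - Ae), heYπ, mul_neg,
      ← mul_assoc, ← mul_assoc, hTe]
  have h1mTY : (1 : Matrix p p ℂ) - T * Y * (1 - Ae) = 1 + T * S * (1 - Ae) := by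
    rw [hTYπ, sub_neg_eq_add]
  have hT2Y : T ^ 2 * Y * (1 - Ae) = -(T ^ 2 * S * (1 - Ae)) := by
    rw [pow_two, mul_assoc T T Y, mul_assoc T (T * Y) (1 - Ae), hTYπ, mul_neg,
      ← mul_assoc, ← mul_assoc, ← pow_two]
  have hπYT : ∀ k : ℕ, (1 - Ae) * Y * T ^ (k + 1) = -((1 - Ae) * S * T ^ (k + 1)) := by
    intro k
    conv_lhs => rw [← hKey1 k]
    rw [← mul_assoc, hYe, neg_mul, mul_assoc ((1 - Ae) * S) Ae (T ^ (k + 1)), hKey1]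
  have hsummand : ∀ i ∈ Finset.range (r - 1),
      -(S ^ i * (1 - Ae) * Y * T ^ (i + 2) * (1 - T * Y * (1 - Ae)))
        = S ^ i * ((1 - Ae) * S) * T ^ (i + 2) * (1 + T * S * (1 - Ae)) := by
    intro i _
    rw [h1mTY]
    have hleft : S ^ i * (1 - Ae) * Y * T ^ (i + 2)
        = -(S ^ i * ((1 - Ae) * S) * T ^ (i + 2)) := by
      rw [mul_assoc (S ^ i) (1 - Ae) Y,
        mul_assoc (S ^ i) ((1 - Ae) * Y) (T ^ (i + 2)),
        show i + 2 = (i + 1) + 1 from rfl, hπYT (i + 1), mul_neg,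
        ← mul_assoc (S ^ i) ((1 - Ae) * S) (T ^ (i + 1 + 1))]
    rw [hleft, neg_mul, neg_neg]
  have hconv : -(∑ i ∈ Finset.range (r - 1),
        S ^ i * (1 - Ae) * Y * T ^ (i + 2) * (1 - T * Y * (1 - Ae)))
        + T - T ^ 2 * Y * (1 - Ae)
      = (∑ i ∈ Finset.range (r - 1),
          S ^ i * ((1 - Ae) * S) * T ^ (i + 2) * (1 + T * S * (1 - Ae)))
        + T + T ^ 2 * S * (1 - Ae) := by
    rw [hT2Y, sub_neg_eq_add]
    congr 2
    rw [← Finset.sum_neg_distrib]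
    exact Finset.sum_congr rfl hsummand
  rw [hconv]
  exact key
end

section
/- Suppose S_{A^e}*T = A*A^D, that A^π*S is r-nilpotent, i.e. (A^π*S)^r = 0, and that A^π*Y*A^e*S = 0. Then S has a Drazin inverse, given by S^D = −Σ_{i=0}^{r−1} T^{i+2}*Y*A^π*S^i + T. -/
open Matrix Finset

theorem aux12 {n : Type*} [Fintype n] [DecidableEq n]
    (S T P Q : Matrix n n ℂ) (r : ℕ)
    (hQdef : Q = 1 - P)
    (hP : P * P = P)
    (hPT : P * T = T) (hTP : T * P = T)
    (hST : P * S * P * T = P)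
    (hQS0 : Q * S * P * S = 0)
    (hnil : (Q * S) ^ r = 0) :
    IsDrazinInverse S (T + ∑ i ∈ Finset.range r, T ^ (i + 2) * S * (Q * S ^ i)) := by
  have hQP0 : Q * P = 0 := by rw [hQdef, sub_mul, one_mul, hP, sub_self]
  have hPQ0 : P * Q = 0 := by rw [hQdef, mul_sub, mul_one, hP, sub_self]
  have hQQ : Q * Q = Q := by
    rw [hQdef, mul_sub, mul_one, sub_mul, one_mul, hP, sub_self, sub_zero]
  have hQT : Q * T = 0 := by rw [hQdef, sub_mul, one_mul, hPT, sub_self]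
  have hTQ : T * Q = 0 := by rw [hQdef, mul_sub, mul_one, hTP, sub_self]
  have hPQ1 : P + Q = 1 := by rw [hQdef]; abel
  have h1Q : (1 : Matrix n n ℂ) - Q = P := by rw [hQdef, sub_sub_cancel]
  -- Q*S*P = 0
  have hABC : Q * S * P * S * P * T = Q * S * P := by
    calc Q * S * P * S * P * T = Q * S * (P * S * P * T) := by simp only [mul_assoc]
      _ = Q * S * P := by rw [hST]
  have hQSP : Q * S * P = 0 := by rw [← hABC, hQS0, zero_mul, zero_mul]
  -- S*P = P*S*P
  have hSP : S * P = P * S * P := by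
    have h := hQSP
    rw [hQdef, sub_mul, sub_mul, one_mul] at h
    exact sub_eq_zero.mp h
  have hST2 : S * T = P := by
    calc S * T = S * (P * T) := by rw [hPT]
      _ = S * P * T := (mul_assoc S P T).symm
      _ = P * S * P * T := by rw [hSP]
      _ = P := hST
  -- T*S*P = P via invertibility
  have hNM : (P * S * P + Q) * (T + Q) = 1 := by
    have e : P * S * P * Q = 0 := by
      rw [mul_assoc (P * S) P Q, hPQ0, mul_zero]
    rw [add_mul, mul_add, mul_add, hST, e, hQT, hQQ, add_zero, zero_add]
    exact hPQ1
  have hTM : T * (P * S * P) = P := by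
    have h : (T + Q) * (P * S * P + Q) = 1 := by
      rw [mul_eq_one_comm]; exact hNM
    have e2 : Q * (P * S * P) = 0 := by
      rw [← mul_assoc, ← mul_assoc, hQP0, zero_mul, zero_mul]
    rw [add_mul, mul_add, mul_add, hTQ, e2, hQQ, add_zero, zero_add] at h
    have h2 := eq_sub_of_add_eq h
    rw [h1Q] at h2
    exact h2
  have hTSP : T * S * P = P := by
    calc T * S * P = T * (S * P) := mul_assoc T S P
      _ = T * (P * S * P) := by rw [hSP]
      _ = P := hTM
  -- nilpotent-part identities
  have hQSS : Q * S * S = Q * S * (Q * S) := by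
    calc Q * S * S = Q * S * (1 * S) := by rw [one_mul]
      _ = Q * S * ((P + Q) * S) := by rw [hPQ1]
      _ = Q * S * (P * S) + Q * S * (Q * S) := by rw [add_mul, mul_add]
      _ = Q * S * P * S + Q * S * (Q * S) := by rw [mul_assoc (Q * S) P S]
      _ = Q * S * (Q * S) := by rw [hQS0, zero_add]
  have hL : ∀ i, (Q * S) * S ^ i = (Q * S) ^ (i + 1) := by
    intro i
    induction i with
    | zero => simp
    | succ j ih =>
      rw [pow_succ' S j, ← mul_assoc, hQSS, mul_assoc, ih, ← pow_succ']
  have hQpow : ∀ m, Q * S ^ (m + 1) = (Q * S) ^ (m + 1) := by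
    intro m
    rw [pow_succ' S m, ← mul_assoc]
    exact hL m
  have hQSQ : Q * S * Q = Q * S := by
    have h : Q * S * Q = Q * S - Q * S * P := by
      rw [hQdef, mul_sub, mul_one]
    rw [h, hQSP, sub_zero]
  have hQSQm : ∀ m, Q * S * (Q * S ^ m) = Q * S ^ (m + 1) := by
    intro m
    cases m with
    | zero => rw [pow_zero, mul_one, hQSQ, pow_one]
    | succ j =>
      rw [hQpow j, hQpow (j + 1), ← pow_succ']
  have hQSjP : ∀ j, Q * S ^ j * P = 0 := by
    intro j
    cases j with
    | zero => rw [pow_zero, mul_one, hQP0]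
    | succ m =>
      rw [hQpow m, pow_succ, mul_assoc, hQSP, mul_zero]
  have hQSjT : ∀ j, Q * S ^ j * T = 0 := by
    intro j
    rw [← hPT, ← mul_assoc, hQSjP, zero_mul]
  have hQSr : Q * S ^ r = 0 := by
    cases r with
    | zero =>
      have h10 : (1 : Matrix n n ℂ) = 0 := by simpa using hnil
      calc Q * S ^ 0 = Q * 1 := by rw [pow_zero]
        _ = Q * 0 := by rw [h10]
        _ = 0 := mul_zero Q
    | succ m => rw [hQpow m]; exact hnil
  -- power lemmas
  have hPpow : ∀ m, P * T ^ (m + 1) = T ^ (m + 1) := by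
    intro m
    induction m with
    | zero => rw [pow_one]; exact hPT
    | succ k ih => rw [pow_succ, ← mul_assoc, ih]
  have hbase : ∀ l, S ^ (l + 1) * T = S ^ l * P := by
    intro l
    rw [pow_succ, mul_assoc, hST2]
  have hSpowT : ∀ i m, S ^ (m + i + 1) * T ^ (i + 1) = S ^ m * P := by
    intro i
    induction i with
    | zero => intro m; simpa using hbase m
    | succ j ih =>
      intro m
      rw [show m + (j + 1) + 1 = m + 1 + j + 1 by omega]
      rw [pow_succ T (j + 1), ← mul_assoc, ih (m + 1), mul_assoc, hPT]
      exact hbase m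
  have hSrg : ∀ i ∈ Finset.range r,
      S ^ r * (T ^ (i + 1) * S * (Q * S ^ i)) = S ^ (r - 1 - i) * (P * S * (Q * S ^ i)) := by
    intro i hi
    obtain ⟨m, hm⟩ : ∃ m, r = m + i + 1 := ⟨r - i - 1, by
      have := Finset.mem_range.mp hi; omega⟩
    have hm2 : r - 1 - i = m := by omega
    rw [hm2, hm]
    calc S ^ (m + i + 1) * (T ^ (i + 1) * S * (Q * S ^ i))
        = (S ^ (m + i + 1) * T ^ (i + 1)) * (S * (Q * S ^ i)) := by simp only [mul_assoc]
      _ = (S ^ m * P) * (S * (Q * S ^ i)) := by rw [hSpowT]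
      _ = S ^ m * (P * S * (Q * S ^ i)) := by simp only [mul_assoc]
  have hC : ∀ m, S ^ m * Q =
      (∑ i ∈ Finset.range m, S ^ (m - 1 - i) * (P * S * (Q * S ^ i))) + Q * S ^ m := by
    intro m
    induction m with
    | zero => simp
    | succ m ih =>
      calc S ^ (m + 1) * Q = S * (S ^ m * Q) := by rw [pow_succ' S m, mul_assoc]
        _ = S * ((∑ i ∈ Finset.range m, S ^ (m - 1 - i) * (P * S * (Q * S ^ i))) + Q * S ^ m) := by
            rw [ih]
        _ = (∑ i ∈ Finset.range m, S * (S ^ (m - 1 - i) * (P * S * (Q * S ^ i))))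
            + S * (Q * S ^ m) := by rw [mul_add, Finset.mul_sum]
        _ = (∑ i ∈ Finset.range m, S ^ (m + 1 - 1 - i) * (P * S * (Q * S ^ i)))
            + (P * S * (Q * S ^ m) + Q * S ^ (m + 1)) := by
            congr 1
            · refine Finset.sum_congr rfl (fun i hi => ?_)
              have hii : m - 1 - i + 1 = m + 1 - 1 - i := by
                have := Finset.mem_range.mp hi; omega
              rw [← mul_assoc, ← pow_succ', hii]
            · calc S * (Q * S ^ m) = 1 * (S * (Q * S ^ m)) := (one_mul _).symm
                _ = (P + Q) * (S * (Q * S ^ m)) := by rw [hPQ1]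
                _ = P * (S * (Q * S ^ m)) + Q * (S * (Q * S ^ m)) := by rw [add_mul]
                _ = P * S * (Q * S ^ m) + Q * S ^ (m + 1) := by
                    rw [← mul_assoc P S (Q * S ^ m), ← mul_assoc Q S (Q * S ^ m), hQSQm m]
        _ = (∑ i ∈ Finset.range (m + 1), S ^ (m + 1 - 1 - i) * (P * S * (Q * S ^ i)))
            + Q * S ^ (m + 1) := by
            rw [Finset.sum_range_succ]
            have h0 : m + 1 - 1 - m = 0 := by omega
            rw [h0, pow_zero, one_mul, add_assoc]
  -- key per-term computations
  have key1 : ∀ i, S * (T ^ (i + 2) * S * (Q * S ^ i)) = T ^ (i + 1) * S * (Q * S ^ i) := by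
    intro i
    rw [show T ^ (i + 2) = T * T ^ (i + 1) from pow_succ' T (i + 1)]
    simp only [← mul_assoc]
    rw [hST2, hPpow]
  have key2 : ∀ i, (T ^ (i + 2) * S * (Q * S ^ i)) * S = T ^ (i + 2) * S * (Q * S ^ (i + 1)) := by
    intro i
    rw [pow_succ S i]
    simp only [mul_assoc]
  have hPf : ∀ i, P * (T ^ (i + 2) * S * (Q * S ^ i)) = T ^ (i + 2) * S * (Q * S ^ i) := by
    intro i
    rw [show T ^ (i + 2) = T * T ^ (i + 1) from pow_succ' T (i + 1)]
    simp only [← mul_assoc]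
    rw [hPT]
  -- S*X and X*S
  have hSX : S * (T + ∑ i ∈ Finset.range r, T ^ (i + 2) * S * (Q * S ^ i))
      = P + ∑ i ∈ Finset.range r, T ^ (i + 1) * S * (Q * S ^ i) := by
    rw [mul_add, Finset.mul_sum, hST2]
    congr 1
    exact Finset.sum_congr rfl (fun i _ => key1 i)
  have hXS : (T + ∑ i ∈ Finset.range r, T ^ (i + 2) * S * (Q * S ^ i)) * S
      = P + ∑ i ∈ Finset.range r, T ^ (i + 1) * S * (Q * S ^ i) := by
    rw [add_mul, Finset.sum_mul]
    have s2 : ∑ i ∈ Finset.range r, (T ^ (i + 2) * S * (Q * S ^ i)) * S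
        = ∑ i ∈ Finset.range r, T ^ (i + 2) * S * (Q * S ^ (i + 1)) :=
      Finset.sum_congr rfl (fun i _ => key2 i)
    rw [s2]
    have e1 : ∑ i ∈ Finset.range (r + 1), T ^ (i + 1) * S * (Q * S ^ i)
        = (∑ i ∈ Finset.range r, T ^ (i + 1 + 1) * S * (Q * S ^ (i + 1)))
          + T ^ (0 + 1) * S * (Q * S ^ 0) := Finset.sum_range_succ' _ r
    have e2 : ∑ i ∈ Finset.range (r + 1), T ^ (i + 1) * S * (Q * S ^ i)
        = (∑ i ∈ Finset.range r, T ^ (i + 1) * S * (Q * S ^ i))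
          + T ^ (r + 1) * S * (Q * S ^ r) := Finset.sum_range_succ _ r
    rw [hQSr, mul_zero, add_zero] at e2
    have e7 : ∑ i ∈ Finset.range r, T ^ (i + 1 + 1) * S * (Q * S ^ (i + 1))
        = ∑ i ∈ Finset.range r, T ^ (i + 2) * S * (Q * S ^ (i + 1)) :=
      Finset.sum_congr rfl (fun i _ => rfl)
    rw [e2, e7] at e1
    rw [e1]
    have e8 : T * S = P + T ^ (0 + 1) * S * (Q * S ^ 0) := by
      rw [zero_add, pow_one, pow_zero, mul_one]
      calc T * S = T * S * 1 := (mul_one _).symm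
        _ = T * S * (P + Q) := by rw [hPQ1]
        _ = T * S * P + T * S * Q := by rw [mul_add]
        _ = P + T * S * Q := by rw [hTSP]
    rw [e8]
    abel
  refine ⟨?_, ?_, r, ?_⟩
  · -- X * S * X = X
    rw [hXS, add_mul, Finset.sum_mul]
    have hPX : P * (T + ∑ i ∈ Finset.range r, T ^ (i + 2) * S * (Q * S ^ i))
        = T + ∑ i ∈ Finset.range r, T ^ (i + 2) * S * (Q * S ^ i) := by
      rw [mul_add, Finset.mul_sum, hPT]
      congr 1
      exact Finset.sum_congr rfl (fun i _ => hPf i)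
    have hgX0 : ∀ i ∈ Finset.range r,
        (T ^ (i + 1) * S * (Q * S ^ i))
          * (T + ∑ j ∈ Finset.range r, T ^ (j + 2) * S * (Q * S ^ j)) = 0 := by
      intro i _
      rw [mul_add, Finset.mul_sum]
      have h1 : T ^ (i + 1) * S * (Q * S ^ i) * T = 0 := by
        rw [mul_assoc (T ^ (i + 1) * S) (Q * S ^ i) T, hQSjT i, mul_zero]
      have h2 : ∀ j ∈ Finset.range r,
          T ^ (i + 1) * S * (Q * S ^ i) * (T ^ (j + 2) * S * (Q * S ^ j)) = 0 := by
        intro j _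
        rw [show T ^ (j + 2) = T * T ^ (j + 1) from pow_succ' T (j + 1)]
        calc T ^ (i + 1) * S * (Q * S ^ i) * (T * T ^ (j + 1) * S * (Q * S ^ j))
            = T ^ (i + 1) * S * (Q * S ^ i * T) * (T ^ (j + 1) * S * (Q * S ^ j)) := by
              simp only [mul_assoc]
          _ = 0 := by rw [hQSjT i]; simp
      rw [h1, Finset.sum_eq_zero h2, add_zero]
    rw [hPX, Finset.sum_eq_zero hgX0, add_zero]
  · -- S * X = X * S
    rw [hSX, hXS]
  · -- S^(r+1) * X = S^r
    rw [pow_succ S r, mul_assoc, hSX, mul_add, Finset.mul_sum]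
    have s3 : ∑ i ∈ Finset.range r, S ^ r * (T ^ (i + 1) * S * (Q * S ^ i))
        = ∑ i ∈ Finset.range r, S ^ (r - 1 - i) * (P * S * (Q * S ^ i)) :=
      Finset.sum_congr rfl hSrg
    rw [s3]
    have hCr := hC r
    rw [hQSr, add_zero] at hCr
    rw [← hCr, ← mul_add, hPQ1, mul_one]

theorem stmt12
    {p q : Type*} [Fintype p] [DecidableEq p] [Fintype q] [DecidableEq q]
    (A AD : Matrix p p ℂ) (D DD : Matrix q q ℂ)
    (B : Matrix q p ℂ) (C : Matrix p q ℂ)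
    (hA : IsDrazinInverse A AD) (hD : IsDrazinInverse D DD)
    (Y S Ae Aπ SAe : Matrix p p ℂ)
    (hY : Y = C * DD * B) (hS : S = A - Y)
    (hAe : Ae = A * AD) (hAπ : Aπ = 1 - A * AD)
    (hSAe : SAe = Ae * S * Ae)
    (Z ZD : Matrix q q ℂ) (hZdef : Z = D - B * AD * C)
    (hZ : IsDrazinInverse Z ZD)
    (K : Matrix p q ℂ) (H : Matrix q p ℂ)
    (hK : K = AD * C) (hH : H = B * AD)
    (T : Matrix p p ℂ) (hT : T = AD + K * ZD * H)
    (hST : SAe * T = A * AD)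
    (r : ℕ) (hnil : (Aπ * S) ^ r = 0)
    (hcond : Aπ * Y * Ae * S = 0) :
    IsDrazinInverse S
      (-(∑ i ∈ Finset.range r, T ^ (i + 2) * Y * Aπ * S ^ i) + T) := by
  obtain ⟨hA1, hA2, k, hA3⟩ := hA
  have hPP : Ae * Ae = Ae := by
    rw [hAe]
    calc A * AD * (A * AD) = A * (AD * A * AD) := by simp only [mul_assoc]
      _ = A * AD := by rw [hA1]
  have hAeAD : Ae * AD = AD := by rw [hAe, hA2]; exact hA1
  have hADAe : AD * Ae = AD := by rw [hAe, ← mul_assoc]; exact hA1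
  have hPT : Ae * T = T := by
    have h4 : Ae * (AD * C * ZD * (B * AD)) = AD * C * ZD * (B * AD) := by
      simp only [← Matrix.mul_assoc]
      rw [hAeAD]
    rw [hT, hK, hH, mul_add, hAeAD, h4]
  have hTP : T * Ae = T := by
    have h5 : AD * C * ZD * (B * AD) * Ae = AD * C * ZD * (B * AD) := by
      simp only [Matrix.mul_assoc]
      rw [hADAe]
    rw [hT, hK, hH, add_mul, hADAe, h5]
  have hSTa : Ae * S * Ae * T = Ae := by rw [← hSAe, hST, hAe]
  have hADA : A * AD * A = A * (A * AD) := by rw [mul_assoc, ← hA2]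
  have hAπAAe : Aπ * A * Ae = 0 := by
    rw [hAπ, sub_mul, sub_mul, one_mul, hADA, ← hAe]
    rw [mul_assoc A Ae Ae, hPP, sub_self]
  have hQSa : Aπ * S * Ae * S = 0 := by
    have h1 : Aπ * S * Ae = -(Aπ * Y * Ae) := by
      rw [hS, mul_sub, sub_mul, hAπAAe, zero_sub]
    rw [h1, neg_mul, hcond, neg_zero]
  have hTAπ : T * Aπ = 0 := by rw [hAπ, ← hAe, mul_sub, mul_one, hTP, sub_self]
  have hAAπ : A * Aπ = Aπ * A := by
    rw [hAπ, mul_sub, sub_mul, mul_one, one_mul, hADA]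
  have hTAAπ : T * A * Aπ = 0 := by
    rw [mul_assoc, hAAπ, ← mul_assoc, hTAπ, zero_mul]
  have hTAAπ' : T * (A * Aπ) = 0 := by rw [← mul_assoc]; exact hTAAπ
  have hYAS : Y = A - S := by rw [hS, sub_sub_cancel]
  have hterm : ∀ i, T ^ (i + 2) * Y * Aπ * S ^ i = -(T ^ (i + 2) * S * (Aπ * S ^ i)) := by
    intro i
    have h3 : T ^ (i + 2) * A * Aπ = 0 := by
      rw [show T ^ (i + 2) = T ^ (i + 1) * T from pow_succ T (i + 1)]
      simp only [mul_assoc]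
      rw [hTAAπ', mul_zero]
    have h2 : T ^ (i + 2) * Y * Aπ = -(T ^ (i + 2) * S * Aπ) := by
      rw [hYAS, mul_sub, sub_mul, h3, zero_sub]
    rw [h2, neg_mul, mul_assoc (T ^ (i + 2) * S) Aπ (S ^ i)]
  have hXform : -(∑ i ∈ Finset.range r, T ^ (i + 2) * Y * Aπ * S ^ i) + T
      = T + ∑ i ∈ Finset.range r, T ^ (i + 2) * S * (Aπ * S ^ i) := by
    have s1 : ∑ i ∈ Finset.range r, T ^ (i + 2) * Y * Aπ * S ^ i
        = ∑ i ∈ Finset.range r, -(T ^ (i + 2) * S * (Aπ * S ^ i)) :=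
      Finset.sum_congr rfl (fun i _ => hterm i)
    rw [s1, Finset.sum_neg_distrib, neg_neg, add_comm]
  rw [hXform]
  exact aux12 S T Ae Aπ r (by rw [hAπ, hAe]) hPP hPT hTP hSTa hQSa hnil
end

section
/- Suppose K*D^π*Z^D*H = K*D^D*Z^π*H, let k be a natural number with A^(k+1)*A^D = A^k (so k is at least the index of A), and suppose Y*A^π*S = 0. Then S has a Drazin inverse, given by S^D = −Σ_{i=0}^{k−1} A^i*A^π*Y*T^{i+2}*(1 − T*Y*A^π) + T − T^2*Y*A^π. -/
/-!
Put `e = A A^D` and `π = A^π = 1 - e`. The hypothesis on `K D^π Z^D H` says exactly that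
`T = A^D + A^D Y T`, so `T` is a right inverse of `e S e` in the corner ring `e R e`; matrices
are Dedekind-finite, hence it is a two-sided inverse there. With
`L j = ∑_{i<k} A^i π Y T^(i+j)`, the condition `Y π S = 0` gives `Y π A^i = (Y π)^(i+1)`,
which kills `Y L (j+1)`, and `A^k π = 0` makes `S L (j+1) = L j - π Y T^j` telescope.
For `W = T - L 2` and `X = W (1 - T Y π)` (the claimed inverse) this yields
`S X = X S = 1 - π - L 1 - W Y π` and `X S X = X`. Finally `Q = 1 - S X` is an idempotent
commuting with `S` on which `S` acts as `π S`, and `(π S)^(k+1) = A^k π S = 0`.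
-/

open Matrix Finset

section Ring

variable {R : Type*} [Ring R] {A Y T π : R}

theorem pow_mul_eq_of_mul_mul_eq {S Q P : R} (hQ : IsIdempotentElem Q) (hSQ : Commute S Q)
    (hP : P * S * Q = S * Q) (n : ℕ) : (P * S) ^ n * Q = S ^ n * Q := by
  have hQSQ : Q * (S * Q) = S * Q := by rw [← mul_assoc, ← hSQ.eq, mul_assoc, hQ.eq]
  induction n with
  | zero => simp
  | succ n ih =>
    calc (P * S) ^ (n + 1) * Q = (P * S) ^ n * (Q * (S * Q)) := by
          rw [pow_succ, mul_assoc, hP, hQSQ]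
      _ = S ^ (n + 1) * Q := by rw [← mul_assoc, ih, mul_assoc, hQSQ, ← mul_assoc, pow_succ]

theorem proj_mul_sub_pow_succ (hπ : IsIdempotentElem π) (hAπ : Commute A π)
    (hY : Y * π * (A - Y) = 0) (m : ℕ) : (π * (A - Y)) ^ (m + 1) = A ^ m * π * (A - Y) := by
  induction m with
  | zero => simp
  | succ m ih =>
    have hSπS : (A - Y) * π * (A - Y) = A * π * (A - Y) := by
      rw [sub_mul _ Y, sub_mul, hY, sub_zero]
    calc (π * (A - Y)) ^ (m + 2) = A ^ m * (π * A * π) * (A - Y) := by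
          rw [pow_succ, ih, mul_assoc π A π]; simp only [mul_assoc] at hSπS ⊢; rw [hSπS]
      _ = A ^ (m + 1) * π * (A - Y) := by
          rw [← hAπ.eq, mul_assoc A, hπ.eq, pow_succ]; simp only [mul_assoc]

theorem mul_proj_mul_pow (hπ : IsIdempotentElem π) (hAπ : Commute A π)
    (hY : Y * π * (A - Y) = 0) (i : ℕ) : Y * π * A ^ i = (Y * π) ^ (i + 1) := by
  have hYA : Y * π * A = Y * π * Y := by rwa [mul_sub, sub_eq_zero] at hY
  induction i with
  | zero => simp
  | succ i ih =>
    calc Y * π * A ^ (i + 1) = Y * π * A ^ (i + 1) * π := by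
          rw [mul_assoc (Y * π) _ π, (hAπ.pow_left _).eq, ← mul_assoc, mul_assoc Y π π,
            hπ.eq]
      _ = (Y * π) ^ (i + 1) * A * π := by rw [← ih, pow_succ]; simp only [mul_assoc]
      _ = (Y * π) ^ (i + 2) := by
          rw [pow_succ, mul_assoc _ (Y * π) A, hYA]; simp only [pow_succ, mul_assoc]

theorem mul_proj_mul_pow_mul_mul_eq_zero (hπ : IsIdempotentElem π) (hAπ : Commute A π)
    (hY : Y * π * (A - Y) = 0) {M : R} (hM : π * M = 0) (i : ℕ) :
    Y * π * A ^ i * Y * M = 0 := by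
  have hYA : Y * π * Y = Y * π * A := by rw [mul_sub, sub_eq_zero] at hY; exact hY.symm
  calc Y * π * A ^ i * Y * M = (Y * π) ^ i * (Y * π * Y) * M := by
        rw [mul_proj_mul_pow hπ hAπ hY, pow_succ]; simp only [mul_assoc]
    _ = (Y * π) ^ i * Y * (π * A * M) := by rw [hYA]; simp only [mul_assoc]
    _ = 0 := by rw [← hAπ.eq, mul_assoc A π M, hM, mul_zero, mul_zero]

def tailSum (A π Y T : R) (k j : ℕ) : R := ∑ i ∈ range k, A ^ i * π * Y * T ^ (i + j)

theorem proj_mul_tailSum (hπ : IsIdempotentElem π) (hAπ : Commute A π) (k j : ℕ) :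
    π * tailSum A π Y T k j = tailSum A π Y T k j := by
  rw [tailSum, mul_sum]
  refine sum_congr rfl fun i _ => ?_
  have h : π * (A ^ i * π) = A ^ i * π := by
    rw [← mul_assoc, ← (hAπ.pow_left i).eq, mul_assoc, hπ.eq]
  simp only [← mul_assoc] at h ⊢
  rw [h]

theorem mul_tailSum_eq_zero (hAπ : Commute A π) {M : R} (hM : M * π = 0) (k j : ℕ) :
    M * tailSum A π Y T k j = 0 := by
  rw [tailSum, mul_sum]
  refine sum_eq_zero fun i _ => ?_
  have h : M * (A ^ i * π) = 0 := by rw [(hAπ.pow_left i).eq, ← mul_assoc, hM, zero_mul]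
  simp only [← mul_assoc] at h ⊢
  rw [h, zero_mul, zero_mul]

theorem tailSum_succ_mul_proj (hTπ : T * π = 0) (k j : ℕ) :
    tailSum A π Y T k (j + 1) * π = 0 := by
  rw [tailSum, sum_mul]
  refine sum_eq_zero fun i _ => ?_
  simp only [← add_assoc, pow_succ, mul_assoc, hTπ, mul_zero]

theorem tailSum_mul (k j : ℕ) : tailSum A π Y T k j * T = tailSum A π Y T k (j + 1) := by
  rw [tailSum, tailSum, sum_mul]
  refine sum_congr rfl fun i _ => ?_
  rw [mul_assoc, ← pow_succ, add_assoc]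

theorem mul_tailSum_succ (hπ : IsIdempotentElem π) (hAπ : Commute A π)
    (hY : Y * π * (A - Y) = 0) (hπT : π * T = 0) (k j : ℕ) :
    Y * tailSum A π Y T k (j + 1) = 0 := by
  rw [tailSum, mul_sum]
  refine sum_eq_zero fun i _ => ?_
  have hπT' : π * T ^ (i + (j + 1)) = 0 := by
    rw [← add_assoc, pow_succ', ← mul_assoc, hπT, zero_mul]
  calc Y * (A ^ i * π * Y * T ^ (i + (j + 1))) = Y * π * A ^ i * Y * T ^ (i + (j + 1)) := by
        rw [(hAπ.pow_left i).eq]; simp only [mul_assoc]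
    _ = 0 := mul_proj_mul_pow_mul_mul_eq_zero hπ hAπ hY hπT' i

theorem sub_mul_tailSum_succ (hπ : IsIdempotentElem π) (hAπ : Commute A π)
    (hY : Y * π * (A - Y) = 0) (hπT : π * T = 0) {k : ℕ} (hk : A ^ k * π = 0) (j : ℕ) :
    (A - Y) * tailSum A π Y T k (j + 1) = tailSum A π Y T k j - π * Y * T ^ j := by
  let f : ℕ → R := fun i => A ^ i * π * Y * T ^ (i + j)
  have hshift : A * tailSum A π Y T k (j + 1) = ∑ i ∈ range k, f (i + 1) := by
    rw [tailSum, mul_sum]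
    refine sum_congr rfl fun i _ => ?_
    simp only [f, ← mul_assoc, ← pow_succ', add_right_comm i 1 j, add_assoc]
  have hfk : f k = 0 := by simp only [f, hk, zero_mul]
  have htele := sum_range_succ' f k
  rw [sum_range_succ, hfk, add_zero] at htele
  rw [sub_mul, mul_tailSum_succ hπ hAπ hY hπT, sub_zero, hshift, tailSum, htele]
  simp [f]

def drazinCandidate (A π Y T : R) (k : ℕ) : R :=
  (T - tailSum A π Y T k 2) * (1 - T * Y * π)

theorem sub_mul_sub_tailSum (hπ : IsIdempotentElem π) (hAπ : Commute A π)
    (hY : Y * π * (A - Y) = 0) (hπT : π * T = 0) {k : ℕ} (hk : A ^ k * π = 0)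
    (hST : (A - Y) * T = 1 - π - π * Y * T) :
    (A - Y) * (T - tailSum A π Y T k 2) = 1 - π - tailSum A π Y T k 1 := by
  rw [mul_sub, hST, sub_mul_tailSum_succ hπ hAπ hY hπT hk 1, pow_one]
  abel

theorem sub_tailSum_mul_sub (hTπ : T * π = 0) (hTS : T * (A - Y) = 1 - π - T * Y * π)
    (k : ℕ) :
    (T - tailSum A π Y T k 2) * (A - Y)
      = 1 - π - tailSum A π Y T k 1 - (T - tailSum A π Y T k 2) * Y * π := by
  have hL : tailSum A π Y T k 2 * (A - Y)
      = tailSum A π Y T k 1 - tailSum A π Y T k 2 * Y * π := by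
    rw [← tailSum_mul k 1, mul_assoc, hTS, mul_sub, mul_sub, mul_one,
      tailSum_succ_mul_proj hTπ k 0, sub_zero]
    simp only [← mul_assoc, tailSum_mul]
  rw [sub_mul, hTS, hL, sub_mul, sub_mul]
  abel

theorem sub_mul_drazinCandidate (hπ : IsIdempotentElem π) (hAπ : Commute A π)
    (hY : Y * π * (A - Y) = 0) (hπT : π * T = 0) {k : ℕ} (hk : A ^ k * π = 0)
    (hST : (A - Y) * T = 1 - π - π * Y * T) :
    (A - Y) * drazinCandidate A π Y T k
      = 1 - π - tailSum A π Y T k 1 - (T - tailSum A π Y T k 2) * Y * π := by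
  rw [drazinCandidate, ← mul_assoc, sub_mul_sub_tailSum hπ hAπ hY hπT hk hST]
  have hπTYπ : π * (T * Y * π) = 0 := by simp only [← mul_assoc, hπT, zero_mul]
  have hLTYπ : tailSum A π Y T k 1 * (T * Y * π) = tailSum A π Y T k 2 * Y * π := by
    simp only [← mul_assoc, tailSum_mul]
  rw [mul_sub, mul_one, sub_mul, sub_mul, one_mul, hπTYπ, hLTYπ, sub_mul, sub_mul]
  abel

theorem drazinCandidate_mul_sub (hTπ : T * π = 0) (hY : Y * π * (A - Y) = 0)
    (hTS : T * (A - Y) = 1 - π - T * Y * π) (k : ℕ) :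
    drazinCandidate A π Y T k * (A - Y)
      = 1 - π - tailSum A π Y T k 1 - (T - tailSum A π Y T k 2) * Y * π := by
  have hTYπS : T * Y * π * (A - Y) = 0 := by simp only [mul_assoc T, hY, mul_zero]
  rw [drazinCandidate, mul_assoc, sub_mul (1 : R), one_mul, hTYπS, sub_zero,
    sub_tailSum_mul_sub hTπ hTS]

theorem drazinCandidate_mul_sub_mul (hπ : IsIdempotentElem π) (hAπ : Commute A π)
    (hY : Y * π * (A - Y) = 0) (hπT : π * T = 0) (hTπ : T * π = 0) {k : ℕ}
    (hk : A ^ k * π = 0) (hST : (A - Y) * T = 1 - π - π * Y * T) :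
    drazinCandidate A π Y T k * (A - Y) * drazinCandidate A π Y T k
      = drazinCandidate A π Y T k := by
  set W := T - tailSum A π Y T k 2 with hW
  set E := 1 - π - tailSum A π Y T k 1
  have hWπ : W * π = 0 := by rw [sub_mul, hTπ, tailSum_succ_mul_proj hTπ, sub_zero]
  have hWE : W * E = W := by
    rw [mul_sub, mul_sub, mul_one, hWπ, mul_tailSum_eq_zero hAπ hWπ, sub_zero, sub_zero]
  have hE : (1 - T * Y * π) * E = E := by
    have hπL : π * tailSum A π Y T k 1 = tailSum A π Y T k 1 := proj_mul_tailSum hπ hAπ k 1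
    have hYL : Y * tailSum A π Y T k 1 = 0 := mul_tailSum_succ hπ hAπ hY hπT k 0
    rw [sub_mul (1 : R), one_mul, sub_eq_self, mul_sub, mul_sub, mul_one, mul_assoc _ π π, hπ.eq,
      sub_self, zero_sub, mul_assoc _ π, hπL, mul_assoc, hYL, mul_zero, neg_zero]
  calc drazinCandidate A π Y T k * (A - Y) * drazinCandidate A π Y T k
      = W * ((1 - T * Y * π) * ((A - Y) * W)) * (1 - T * Y * π) := by
        simp only [drazinCandidate, ← hW, mul_assoc]
    _ = drazinCandidate A π Y T k := by
        rw [sub_mul_sub_tailSum hπ hAπ hY hπT hk hST, hE, hWE, drazinCandidate]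

theorem pow_succ_mul_eq_of_proj {S X P : R} (hXSX : X * S * X = X) (hSX : S * X = X * S)
    (hP : P * ((1 - S * X) * S) = (1 - S * X) * S) {n : ℕ} (hn : (P * S) ^ n = 0) :
    S ^ (n + 1) * X = S ^ n := by
  have hQ : IsIdempotentElem (1 - S * X) := by
    refine IsIdempotentElem.one_sub ?_
    rw [IsIdempotentElem, mul_assoc, ← mul_assoc X, hXSX]
  have hSQ : Commute S (1 - S * X) := by
    show S * (1 - S * X) = (1 - S * X) * S
    rw [mul_sub, sub_mul, mul_one, one_mul, hSX, ← mul_assoc, ← hSX]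
  have hPSQ : P * S * (1 - S * X) = S * (1 - S * X) := by rw [mul_assoc, hSQ.eq, hP]
  have hSQ0 : S ^ n * (1 - S * X) = 0 := by
    rw [← pow_mul_eq_of_mul_mul_eq hQ hSQ hPSQ, hn, zero_mul]
  rw [pow_succ, mul_assoc, ← sub_sub_cancel 1 (S * X), mul_sub, mul_one, hSQ0, sub_zero]

theorem drazinCandidate_spec_of_proj (hπ : IsIdempotentElem π) (hAπ : Commute A π)
    (hY : Y * π * (A - Y) = 0) (hπT : π * T = 0) (hTπ : T * π = 0) {k : ℕ}
    (hk : A ^ k * π = 0) (hST : (A - Y) * T = 1 - π - π * Y * T)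
    (hTS : T * (A - Y) = 1 - π - T * Y * π) :
    drazinCandidate A π Y T k * (A - Y) * drazinCandidate A π Y T k
        = drazinCandidate A π Y T k ∧
      (A - Y) * drazinCandidate A π Y T k = drazinCandidate A π Y T k * (A - Y) ∧
      (A - Y) ^ (k + 1 + 1) * drazinCandidate A π Y T k = (A - Y) ^ (k + 1) := by
  have hSX := sub_mul_drazinCandidate hπ hAπ hY hπT hk hST
  have hXSX := drazinCandidate_mul_sub_mul hπ hAπ hY hπT hTπ hk hST
  have hcomm := hSX.trans (drazinCandidate_mul_sub hTπ hY hTS k).symm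
  refine ⟨hXSX, hcomm, pow_succ_mul_eq_of_proj (P := π) hXSX hcomm ?_ ?_⟩
  · have hQS : (1 - (A - Y) * drazinCandidate A π Y T k) * (A - Y)
        = π * (A - Y) + tailSum A π Y T k 1 * (A - Y) := by
      rw [hSX, show ∀ a b c : R, 1 - (1 - a - b - c) = a + b + c by intros; abel, add_mul,
        add_mul, mul_assoc _ Y π, mul_assoc _ (Y * π), hY, mul_zero, add_zero]
    rw [hQS, mul_add, ← mul_assoc, hπ.eq, ← mul_assoc, proj_mul_tailSum hπ hAπ]
  · rw [proj_mul_sub_pow_succ hπ hAπ hY, hk, zero_mul]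

theorem IsIdempotentElem.mul_mul_eq_of_mul_mul_eq [IsDedekindFiniteMonoid R] {e S T : R}
    (he : IsIdempotentElem e) (heT : e * T = T) (hTe : T * e = T) (h : e * S * T = e) :
    T * S * e = e := by
  have hright : (e * S * e + (1 - e)) * (T + (1 - e)) = 1 := by
    calc (e * S * e + (1 - e)) * (T + (1 - e))
        = e * S * (e * T) + e * S * (e - e * e) + (T - e * T) + (1 - e - e + e * e) := by
          noncomm_ring
      _ = 1 := by rw [heT, he.eq, h, sub_self, sub_self, mul_zero]; abel
  have hleft := mul_eq_one_comm.mp hright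
  have hexpand : (T + (1 - e)) * (e * S * e + (1 - e))
      = T * e * S * e + (T - T * e) + (e * S * e - e * e * S * e) + (1 - e - e + e * e) := by
    noncomm_ring
  rw [hexpand, hTe, he.eq, sub_self, sub_self, add_zero, add_zero] at hleft
  calc T * S * e = T * S * e + (1 - e - e + e) - (1 - e) := by abel
    _ = e := by rw [hleft]; abel

theorem mul_sub_eq_of_sub_mul_eq [IsDedekindFiniteMonoid R] (hπ : IsIdempotentElem π)
    (hAπ : Commute A π) (hπT : π * T = 0) (hTπ : T * π = 0)
    (hST : (A - Y) * T = 1 - π - π * Y * T) :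
    T * (A - Y) = 1 - π - T * Y * π := by
  have heT : (1 - π) * T = T := by rw [sub_mul, one_mul, hπT, sub_zero]
  have hTe : T * (1 - π) = T := by rw [mul_sub, mul_one, hTπ, sub_zero]
  have hcorner : (1 - π) * (A - Y) * T = 1 - π := by
    rw [mul_assoc, hST, mul_sub, hπ.one_sub.eq, ← mul_assoc, ← mul_assoc, one_sub_mul π π,
      hπ.eq, sub_self, zero_mul, zero_mul, sub_zero]
  calc T * (A - Y) = T * (A - Y) * (1 - π) + T * (A - Y) * π := by noncomm_ring
    _ = 1 - π - T * Y * π := by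
      rw [hπ.one_sub.mul_mul_eq_of_mul_mul_eq heT hTe hcorner, mul_sub T A Y, sub_mul,
        mul_assoc T A, hAπ.eq, ← mul_assoc, hTπ, zero_mul, zero_sub, ← sub_eq_add_neg]

theorem drazinCandidate_spec [IsDedekindFiniteMonoid R] {AD : R} {k : ℕ}
    (hAD : AD * A * AD = AD) (hA : A * AD = AD * A) (hk : A ^ (k + 1) * AD = A ^ k)
    (hT : T = AD + AD * Y * T) (hTπ : T * (1 - A * AD) = 0)
    (hY : Y * (1 - A * AD) * (A - Y) = 0) :
    drazinCandidate A (1 - A * AD) Y T k * (A - Y) * drazinCandidate A (1 - A * AD) Y T k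
        = drazinCandidate A (1 - A * AD) Y T k ∧
      (A - Y) * drazinCandidate A (1 - A * AD) Y T k
        = drazinCandidate A (1 - A * AD) Y T k * (A - Y) ∧
      (A - Y) ^ (k + 1 + 1) * drazinCandidate A (1 - A * AD) Y T k = (A - Y) ^ (k + 1) := by
  have he : IsIdempotentElem (A * AD) := by
    rw [IsIdempotentElem, mul_assoc, ← mul_assoc AD, hAD]
  have hAπ : Commute A (1 - A * AD) :=
    (Commute.one_right A).sub_right ((Commute.refl A).mul_right hA)
  have hπAD : (1 - A * AD) * AD = 0 := by rw [sub_mul, one_mul, hA, hAD, sub_self]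
  have hπT : (1 - A * AD) * T = 0 := by
    rw [hT, mul_add, hπAD, ← mul_assoc, ← mul_assoc, hπAD, zero_mul, zero_mul, add_zero]
  have hk' : A ^ k * (1 - A * AD) = 0 := by
    rw [mul_sub, mul_one, ← mul_assoc, ← pow_succ, hk, sub_self]
  have hST : (A - Y) * T = 1 - (1 - A * AD) - (1 - A * AD) * Y * T := by
    have hAT : A * T = A * AD + A * AD * Y * T := by
      conv_lhs => rw [hT]
      noncomm_ring
    rw [sub_mul, hAT]
    noncomm_ring
  exact drazinCandidate_spec_of_proj he.one_sub hAπ hY hπT hTπ hk' hST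
    (mul_sub_eq_of_sub_mul_eq he.one_sub hAπ hπT hTπ hST)

end Ring

theorem Matrix.eq_add_mul_mul_of_schur {α : Type*} [Ring α] {p q : Type*} [Fintype p]
    [Fintype q] [DecidableEq q] {AD : Matrix p p α} {D DD ZD : Matrix q q α}
    {B : Matrix q p α} {C : Matrix p q α} (hD : D * DD = DD * D)
    (h : AD * C * (1 - D * DD) * ZD * (B * AD)
      = AD * C * DD * (1 - (D - B * AD * C) * ZD) * (B * AD)) :
    AD + AD * C * ZD * (B * AD)
      = AD + AD * (C * DD * B) * (AD + AD * C * ZD * (B * AD)) := by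
  simp only [Matrix.mul_sub, Matrix.sub_mul, Matrix.mul_add, Matrix.mul_one,
    Matrix.mul_assoc] at h ⊢
  rw [← Matrix.mul_assoc D DD, hD, Matrix.mul_assoc] at h
  rw [sub_eq_iff_eq_add, sub_sub_eq_add_sub, sub_add_cancel] at h
  conv_lhs => rw [h]

theorem stmt14_general
    {p q : Type*} [Fintype p] [DecidableEq p] [Fintype q] [DecidableEq q]
    (A AD : Matrix p p ℂ) (D DD : Matrix q q ℂ)
    (B : Matrix q p ℂ) (C : Matrix p q ℂ)
    (hA : IsDrazinInverse A AD) (hD : IsDrazinInverse D DD)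
    (Y S Aπ : Matrix p p ℂ)
    (hY : Y = C * DD * B) (hS : S = A - Y)
    (hAπ : Aπ = 1 - A * AD)
    (Z ZD : Matrix q q ℂ) (hZdef : Z = D - B * AD * C)
    (K : Matrix p q ℂ) (H : Matrix q p ℂ)
    (hK : K = AD * C) (hH : H = B * AD)
    (Dπ Zπ : Matrix q q ℂ) (hDπ : Dπ = 1 - D * DD) (hZπ : Zπ = 1 - Z * ZD)
    (T : Matrix p p ℂ) (hT : T = AD + K * ZD * H)
    (hcond1 : K * Dπ * ZD * H = K * DD * Zπ * H)
    (k : ℕ) (hk : A ^ (k + 1) * AD = A ^ k)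
    (hcond2 : Y * Aπ * S = 0) :
    IsDrazinInverse S
      (-(∑ i ∈ Finset.range k,
          A ^ i * Aπ * Y * T ^ (i + 2) * (1 - T * Y * Aπ))
        + T - T ^ 2 * Y * Aπ) := by
  obtain ⟨hAD, hAAD, -⟩ := hA
  obtain ⟨-, hDDD, -⟩ := hD
  subst hS hAπ
  have hTY : T = AD + AD * Y * T := by
    rw [hT, hK, hH, hY]
    rw [hDπ, hZπ, hZdef, hK, hH] at hcond1
    exact Matrix.eq_add_mul_mul_of_schur hDDD hcond1
  have hTπ : T * (1 - A * AD) = 0 := by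
    rw [hT, hH, add_mul, Matrix.mul_assoc _ (B * AD), Matrix.mul_assoc B, mul_sub, mul_one,
      ← Matrix.mul_assoc AD A, hAD, sub_self]
    simp
  have hX : -(∑ i ∈ Finset.range k,
          A ^ i * (1 - A * AD) * Y * T ^ (i + 2) * (1 - T * Y * (1 - A * AD)))
        + T - T ^ 2 * Y * (1 - A * AD) = drazinCandidate A (1 - A * AD) Y T k := by
    rw [drazinCandidate, tailSum, ← sum_mul, sq]
    noncomm_ring
  obtain ⟨hXSX, hSX, hpow⟩ := drazinCandidate_spec hAD hAAD hk hTY hTπ hcond2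
  rw [hX]
  exact ⟨hXSX, hSX, k + 1, hpow⟩

theorem stmt14
    {p q : Type*} [Fintype p] [DecidableEq p] [Fintype q] [DecidableEq q]
    (A AD : Matrix p p ℂ) (D DD : Matrix q q ℂ)
    (B : Matrix q p ℂ) (C : Matrix p q ℂ)
    (hA : IsDrazinInverse A AD) (hD : IsDrazinInverse D DD)
    (Y S Aπ : Matrix p p ℂ)
    (hY : Y = C * DD * B) (hS : S = A - Y)
    (hAπ : Aπ = 1 - A * AD)
    (Z ZD : Matrix q q ℂ) (hZdef : Z = D - B * AD * C)
    (hZ : IsDrazinInverse Z ZD)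
    (K : Matrix p q ℂ) (H : Matrix q p ℂ)
    (hK : K = AD * C) (hH : H = B * AD)
    (Dπ Zπ : Matrix q q ℂ) (hDπ : Dπ = 1 - D * DD) (hZπ : Zπ = 1 - Z * ZD)
    (T : Matrix p p ℂ) (hT : T = AD + K * ZD * H)
    (hcond1 : K * Dπ * ZD * H = K * DD * Zπ * H)
    (k : ℕ) (hk : A ^ (k + 1) * AD = A ^ k)
    (hcond2 : Y * Aπ * S = 0) :
    IsDrazinInverse S
      (-(∑ i ∈ Finset.range k,
          A ^ i * Aπ * Y * T ^ (i + 2) * (1 - T * Y * Aπ))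
        + T - T ^ 2 * Y * Aπ) :=
  stmt14_general A AD D DD B C hA hD Y S Aπ hY hS hAπ Z ZD hZdef K H hK hH Dπ Zπ hDπ hZπ T hT hcond1
    k hk hcond2
end

section
/- Suppose S_{A^e}*T = A*A^D and A^π*Y = 0, and let k be a natural number with A^(k+1)*A^D = A^k (so k is at least the index of A). Then S has a Drazin inverse, given by S^D = T − Σ_{i=0}^{k−1} T^{i+2}*Y*A^π*A^i. -/
open Matrix Finset

private lemma sum_shift {α : Type*} [AddCommMonoid α] (f : ℕ → α) (k : ℕ) (h : f k = 0) :
    f 0 + ∑ i ∈ Finset.range k, f (i + 1) = ∑ i ∈ Finset.range k, f i := by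
  rw [add_comm, ← Finset.sum_range_succ' f k, Finset.sum_range_succ, h, add_zero]

theorem stmt15
    {p q : Type*} [Fintype p] [DecidableEq p] [Fintype q] [DecidableEq q]
    (A AD : Matrix p p ℂ) (D DD : Matrix q q ℂ)
    (B : Matrix q p ℂ) (C : Matrix p q ℂ)
    (hA : IsDrazinInverse A AD) (hD : IsDrazinInverse D DD)
    (Y S Ae Aπ SAe : Matrix p p ℂ)
    (hY : Y = C * DD * B) (hS : S = A - Y)
    (hAe : Ae = A * AD) (hAπ : Aπ = 1 - A * AD)
    (hSAe : SAe = Ae * S * Ae)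
    (Z ZD : Matrix q q ℂ) (hZdef : Z = D - B * AD * C)
    (hZ : IsDrazinInverse Z ZD)
    (K : Matrix p q ℂ) (H : Matrix q p ℂ)
    (hK : K = AD * C) (hH : H = B * AD)
    (T : Matrix p p ℂ) (hT : T = AD + K * ZD * H)
    (hST : SAe * T = A * AD)
    (hcond : Aπ * Y = 0)
    (k : ℕ) (hk : A ^ (k + 1) * AD = A ^ k) :
    IsDrazinInverse S
      (T - ∑ i ∈ Finset.range k, T ^ (i + 2) * Y * Aπ * A ^ i) := by
  obtain ⟨hA1, hA2, -⟩ := hA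
  obtain ⟨E, hE⟩ : ∃ E, E = A * AD := ⟨_, rfl⟩
  rw [← hE] at hAπ hST hAe
  -- basic facts about E
  have hADE : AD * E = AD := by rw [hE, ← mul_assoc]; exact hA1
  have hEAD : E * AD = AD := by rw [hE, hA2]; exact hA1
  have hEA : E * A = A * E := by rw [hE, mul_assoc, ← hA2]
  have hEE : E * E = E := by
    nth_rewrite 2 [hE]
    rw [← mul_assoc, hEA, mul_assoc, hEAD, ← hE]
  have hCEA : Commute E A := hEA
  have hCπ : ∀ i : ℕ, Aπ * A ^ i = A ^ i * Aπ := by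
    intro i
    rw [hAπ, sub_mul, mul_sub, one_mul, mul_one, (hCEA.pow_right i).eq]
  have hCA : Commute A AD := hA2
  have hADpow : AD * A ^ k = A ^ k * AD := (hCA.symm.pow_right k).eq
  have hπAk : Aπ * A ^ k = 0 := by
    rw [hAπ, sub_mul, one_mul, hE, mul_assoc, hADpow, ← mul_assoc, ← pow_succ', hk, sub_self]
  have hAkπ : A ^ k * Aπ = 0 := by rw [← hCπ k]; exact hπAk
  have hEY : E * Y = Y := by
    have h := hcond
    rw [hAπ, sub_mul, one_mul, sub_eq_zero] at h
    exact h.symm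
  -- facts about T
  have hET : E * T = T := by
    have h : E * (AD * C * ZD * (B * AD)) = E * AD * C * ZD * (B * AD) := by
      simp only [← Matrix.mul_assoc]
    rw [hT, hK, hH, mul_add, h, hEAD]
  have hTE : T * E = T := by
    have h : AD * C * ZD * (B * AD) * E = AD * C * ZD * (B * (AD * E)) := by
      simp only [← Matrix.mul_assoc]
    rw [hT, hK, hH, add_mul, h, hADE]
  have hπT : Aπ * T = 0 := by rw [hAπ, sub_mul, one_mul, hET, sub_self]
  have hTπ : T * Aπ = 0 := by rw [hAπ, mul_sub, mul_one, hTE, sub_self]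
  have hEπ : E * Aπ = 0 := by rw [hAπ, mul_sub, mul_one, hEE, sub_self]
  have hπE : Aπ * E = 0 := by rw [hAπ, sub_mul, one_mul, hEE, sub_self]
  have hππ : Aπ * Aπ = Aπ := by
    rw [hAπ, sub_mul, one_mul, mul_sub, mul_one, hEE]
    abel
  -- S*T = E
  have hSAe' : SAe = E * S * E := by rw [hSAe, hAe]
  have hSAeT : E * S * E * T = E := by rw [← hSAe']; exact hST
  have hSTE : S * T = E := by
    have h2 : E * S * E * T = E * (S * T) := by
      rw [mul_assoc (E * S) E T, hET, mul_assoc]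
    have h3 : E * (S * T) = S * T := by
      rw [hS, sub_mul, mul_sub, ← mul_assoc, ← mul_assoc, hEA, mul_assoc, hET, hEY]
    calc S * T = E * (S * T) := h3.symm
      _ = E * S * E * T := h2.symm
      _ = E := hSAeT
  -- T * (E*S*E) = E via mul_eq_one_comm
  have hPπ : E * S * E * Aπ = 0 := by rw [mul_assoc, hEπ, mul_zero]
  have hπP : Aπ * (E * S * E) = 0 := by
    rw [← mul_assoc Aπ (E * S) E, ← mul_assoc Aπ E S, hπE, zero_mul, zero_mul]
  have hMN : (E * S * E + Aπ) * (T + Aπ) = 1 := by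
    rw [add_mul, mul_add, mul_add, hSAeT, hPπ, hπT, hππ, add_zero, zero_add, hAπ]
    abel
  have hNM : (T + Aπ) * (E * S * E + Aπ) = 1 := mul_eq_one_comm.mp hMN
  have hTSAe : T * (E * S * E) = E := by
    rw [add_mul, mul_add, mul_add, hTπ, hπP, hππ, add_zero, zero_add] at hNM
    have h2 := eq_sub_of_add_eq hNM
    rw [hAπ, sub_sub_cancel] at h2
    exact h2
  -- T*S = E - T*Y*Aπ
  have hTSE : T * S * E = E := by
    calc T * S * E = T * E * S * E := by rw [hTE]
      _ = T * (E * S * E) := by noncomm_ring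
      _ = E := hTSAe
  have hTAπ : T * A * Aπ = 0 := by
    have h : T * A = T * (A * E) := by rw [← hEA, ← mul_assoc, hTE]
    rw [h, mul_assoc, mul_assoc, hEπ, mul_zero, mul_zero]
  have hTS : T * S = E - T * Y * Aπ := by
    have h1 : T * S = T * S * E + T * S * Aπ := by rw [hAπ]; noncomm_ring
    rw [h1, hTSE, hS, mul_sub, sub_mul, hTAπ, zero_sub, ← sub_eq_add_neg]
  -- power facts
  have hETn : ∀ n : ℕ, E * T ^ (n + 1) = T ^ (n + 1) := by
    intro n
    rw [pow_succ' T n, ← mul_assoc, hET]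
  have hET2 : ∀ n : ℕ, E * T ^ (n + 2) = T ^ (n + 2) := by
    intro n
    rw [show n + 2 = (n + 1) + 1 from rfl, pow_succ' T (n + 1), ← mul_assoc, hET]
  have hπT2 : ∀ n : ℕ, Aπ * T ^ (n + 2) = 0 := by
    intro n
    rw [show n + 2 = (n + 1) + 1 from rfl, pow_succ' T (n + 1), ← mul_assoc, hπT, zero_mul]
  have hSTn : ∀ n : ℕ, S * T ^ (n + 2) = T ^ (n + 1) := by
    intro n
    rw [show n + 2 = (n + 1) + 1 from rfl, pow_succ' T (n + 1), ← mul_assoc, hSTE, hETn n]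
  -- abbreviations
  obtain ⟨W, hW⟩ : ∃ W, W = ∑ i ∈ Finset.range k, T ^ (i + 2) * Y * Aπ * A ^ i := ⟨_, rfl⟩
  rw [← hW]
  obtain ⟨V, hV⟩ : ∃ V, V = ∑ i ∈ Finset.range k, T ^ (i + 1) * Y * Aπ * A ^ i := ⟨_, rfl⟩
  have hSW : S * W = V := by
    rw [hW, hV, Finset.mul_sum]
    refine Finset.sum_congr rfl fun i _ => ?_
    rw [← mul_assoc, ← mul_assoc, ← mul_assoc, hSTn i]
  have hSX : S * (T - W) = E - V := by rw [mul_sub, hSTE, hSW]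
  -- X*S
  have hπS : Aπ * S = A * Aπ := by
    rw [hS, mul_sub, hcond, sub_zero, hAπ, sub_mul, one_mul, mul_sub, mul_one, hEA]
  have hπiS : ∀ i : ℕ, Aπ * (A ^ i * S) = Aπ * A ^ (i + 1) := by
    intro i
    rw [← mul_assoc, hCπ i, mul_assoc, hπS, ← mul_assoc, ← pow_succ, hCπ (i + 1)]
  have hterm : ∀ i : ℕ, T ^ (i + 2) * Y * Aπ * A ^ i * S = T ^ (i + 2) * Y * (Aπ * A ^ (i + 1)) := by
    intro i
    rw [mul_assoc, mul_assoc, hπiS i]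
  have hXS : (T - W) * S = E - V := by
    have hf0 : T ^ (k + 1) * Y * (Aπ * A ^ k) = 0 := by rw [hπAk, mul_zero]
    have key : T ^ (0 + 1) * Y * (Aπ * A ^ 0)
          + ∑ i ∈ Finset.range k, T ^ (i + 2) * Y * (Aπ * A ^ (i + 1))
        = ∑ i ∈ Finset.range k, T ^ (i + 1) * Y * (Aπ * A ^ i) :=
      sum_shift (fun j => T ^ (j + 1) * Y * (Aπ * A ^ j)) k hf0
    have hValt : V = ∑ i ∈ Finset.range k, T ^ (i + 1) * Y * (Aπ * A ^ i) := by
      rw [hV]; exact Finset.sum_congr rfl fun i _ => mul_assoc _ _ _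
    have hsum : ∑ i ∈ Finset.range k, T ^ (i + 2) * Y * Aπ * A ^ i * S
        = ∑ i ∈ Finset.range k, T ^ (i + 2) * Y * (Aπ * A ^ (i + 1)) :=
      Finset.sum_congr rfl fun i _ => hterm i
    have h0 : T ^ (0 + 1) * Y * (Aπ * A ^ 0) = T * Y * Aπ := by
      rw [zero_add, pow_one, pow_zero, mul_one]
    rw [sub_mul, hTS, hW, Finset.sum_mul, hsum, hValt, ← key, h0]
    abel
  -- X*S*X = X
  have hEX : E * (T - W) = T - W := by
    rw [mul_sub, hET, hW, Finset.mul_sum]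
    congr 1
    refine Finset.sum_congr rfl fun i _ => ?_
    rw [← mul_assoc, ← mul_assoc, ← mul_assoc, hET2 i]
  have hπX : Aπ * (T - W) = 0 := by
    rw [mul_sub, hπT, hW, Finset.mul_sum, zero_sub, neg_eq_zero]
    refine Finset.sum_eq_zero fun i _ => ?_
    rw [← mul_assoc, ← mul_assoc, ← mul_assoc, hπT2 i, zero_mul, zero_mul, zero_mul]
  have hπiX : ∀ i : ℕ, Aπ * A ^ i * (T - W) = 0 := by
    intro i
    rw [hCπ i, mul_assoc, hπX, mul_zero]
  have hVX : V * (T - W) = 0 := by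
    rw [hV, Finset.sum_mul]
    refine Finset.sum_eq_zero fun i _ => ?_
    calc T ^ (i + 1) * Y * Aπ * A ^ i * (T - W)
        = T ^ (i + 1) * Y * (Aπ * A ^ i * (T - W)) := by noncomm_ring
      _ = 0 := by rw [hπiX i, mul_zero]
  -- induction formula for S^l * Aπ
  have hind : ∀ l : ℕ, S ^ l * Aπ
      = A ^ l * Aπ - ∑ i ∈ Finset.range l, S ^ (l - 1 - i) * Y * Aπ * A ^ i := by
    intro l
    induction l with
    | zero => simp
    | succ n ih =>
      have h1 : S * (A ^ n * Aπ) = A ^ (n + 1) * Aπ - Y * Aπ * A ^ n := by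
        rw [hS, sub_mul, ← mul_assoc, ← pow_succ']
        conv_rhs => rw [mul_assoc, hCπ n]
      have h2 : S * ∑ i ∈ Finset.range n, S ^ (n - 1 - i) * Y * Aπ * A ^ i
          = ∑ i ∈ Finset.range n, S ^ (n - i) * Y * Aπ * A ^ i := by
        rw [Finset.mul_sum]
        refine Finset.sum_congr rfl fun i hi => ?_
        have hi' : n - 1 - i + 1 = n - i := by
          have := Finset.mem_range.mp hi; omega
        rw [← mul_assoc, ← mul_assoc, ← mul_assoc, ← pow_succ', hi']
      rw [pow_succ' S n, mul_assoc, ih, mul_sub, h1, h2]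
      simp only [Nat.add_sub_cancel]
      rw [Finset.sum_range_succ]
      simp only [Nat.sub_self, pow_zero, one_mul]
      abel
  -- S^(m+i+1) * T^(i+1) = S^m * E
  have hq : ∀ i m : ℕ, S ^ (m + i + 1) * T ^ (i + 1) = S ^ m * E := by
    intro i
    induction i with
    | zero =>
      intro m
      rw [add_zero, pow_one, pow_succ, mul_assoc, hSTE]
    | succ n ih =>
      intro m
      have he : m + (n + 1) + 1 = m + 1 + n + 1 := by omega
      rw [pow_succ T (n + 1), ← mul_assoc, he, ih (m + 1), mul_assoc, hET,
        pow_succ, mul_assoc, hSTE]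
  have hSkV : S ^ k * V = ∑ i ∈ Finset.range k, S ^ (k - 1 - i) * Y * Aπ * A ^ i := by
    rw [hV, Finset.mul_sum]
    refine Finset.sum_congr rfl fun i hi => ?_
    have hi' : k = k - 1 - i + i + 1 := by
      have := Finset.mem_range.mp hi; omega
    calc S ^ k * (T ^ (i + 1) * Y * Aπ * A ^ i)
        = S ^ (k - 1 - i + i + 1) * T ^ (i + 1) * Y * Aπ * A ^ i := by
          rw [← hi']; noncomm_ring
      _ = S ^ (k - 1 - i) * E * Y * Aπ * A ^ i := by rw [hq i (k - 1 - i)]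
      _ = S ^ (k - 1 - i) * Y * Aπ * A ^ i := by
          rw [mul_assoc (S ^ (k - 1 - i)) E Y, hEY]
  -- finish
  refine ⟨?_, ?_, k, ?_⟩
  · rw [hXS, sub_mul, hVX, sub_zero, hEX]
  · rw [hSX, hXS]
  · have hsum := hind k
    rw [hAkπ, zero_sub] at hsum
    have hE1 : E = 1 - Aπ := by rw [hAπ, sub_sub_cancel]
    have h5 : S ^ k * (E - V) = S ^ k := by
      rw [mul_sub, hSkV, hE1, mul_sub, mul_one, hsum]
      abel
    calc S ^ (k + 1) * (T - W) = S ^ k * (S * (T - W)) := by rw [pow_succ, mul_assoc]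
      _ = S ^ k * (E - V) := by rw [hSX]
      _ = S ^ k := h5
end

section
/- Suppose S_{A^e}*T = A*A^D and Y*A^π = 0, and let k be a natural number with A^(k+1)*A^D = A^k (so k is at least the index of A). Then S has a Drazin inverse, given by S^D = T − Σ_{i=0}^{k−1} A^i*A^π*Y*T^{i+2}. -/
open Matrix Finset

private lemma corner_comm {n : Type*} [Fintype n] [DecidableEq n] (P a b : Matrix n n ℂ)
    (hP : P * P = P) (haP : a * P = a) (hPa : P * a = a)
    (hbP : b * P = b) (hPb : P * b = b) (hab : a * b = P) : b * a = P := by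
  have e3 : (1 - P) * (1 - P) = 1 - P := by
    have : (1 - P) * (1 - P) = 1 - P - P + P * P := by noncomm_ring
    rw [this, hP]; abel
  have key : (a + (1 - P)) * (b + (1 - P)) = 1 := by
    have e1 : a * (1 - P) = 0 := by rw [mul_sub, mul_one, haP, sub_self]
    have e2 : (1 - P) * b = 0 := by rw [sub_mul, one_mul, hPb, sub_self]
    rw [add_mul, mul_add, mul_add, hab, e1, e2, e3]
    abel
  have key2 : (b + (1 - P)) * (a + (1 - P)) = 1 := mul_eq_one_comm.mp key
  have e1 : b * (1 - P) = 0 := by rw [mul_sub, mul_one, hbP, sub_self]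
  have e2 : (1 - P) * a = 0 := by rw [sub_mul, one_mul, hPa, sub_self]
  rw [add_mul, mul_add, mul_add, e1, e2, e3] at key2
  calc b * a = (b * a + 0 + (0 + (1 - P))) - (1 - P) := by abel
    _ = 1 - (1 - P) := by rw [key2]
    _ = P := by abel

private lemma drazin_aux_s16 {R : Type*} [Ring R] (A S T Ae Aπ Y X : R)
    (hAπ : Aπ = 1 - Ae) (hPP : Ae * Ae = Ae) (hPA : Ae * A = A * Ae)
    (hPT : Ae * T = T) (hTP : T * Ae = T) (hYAπ : Y * Aπ = 0)
    (hS : S = A - Y)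
    (hSAeT : Ae * S * Ae * T = Ae) (hTSAe : T * (Ae * S * Ae) = Ae)
    (k : ℕ) (hkA : A ^ k * Aπ = 0)
    (hX : X = T - ∑ i ∈ Finset.range k, A ^ i * Aπ * Y * T ^ (i + 2)) :
    X * S * X = X ∧ S * X = X * S ∧ S ^ (k + 1) * X = S ^ k := by
  have hYP : Y * Ae = Y := by
    have h := hYAπ
    rw [hAπ, mul_sub, mul_one, sub_eq_zero] at h
    exact h.symm
  have hAeAπ : Ae * Aπ = 0 := by rw [hAπ, mul_sub, mul_one, hPP, sub_self]
  have hAπAe : Aπ * Ae = 0 := by rw [hAπ, sub_mul, one_mul, hPP, sub_self]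
  have hPAi : ∀ i : ℕ, Ae * A ^ i = A ^ i * Ae := by
    intro i; induction i with
    | zero => simp
    | succ n ih => rw [pow_succ, ← mul_assoc, ih, mul_assoc, hPA, ← mul_assoc]
  have key : ∀ (i : ℕ) (x : R), Ae * (A ^ i * (Aπ * x)) = 0 := by
    intro i x
    rw [← mul_assoc, hPAi, mul_assoc, ← mul_assoc Ae, hAeAπ, zero_mul, mul_zero]
  have keyT : ∀ (i : ℕ) (x : R), T * (A ^ i * (Aπ * x)) = 0 := by
    intro i x; rw [← hTP, mul_assoc, key, mul_zero]
  have keyY : ∀ (i : ℕ) (x : R), Y * (A ^ i * (Aπ * x)) = 0 := by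
    intro i x; rw [← hYP, mul_assoc, key, mul_zero]
  have keyS : ∀ (i : ℕ) (x : R), S * (A ^ i * (Aπ * x)) = A ^ (i + 1) * (Aπ * x) := by
    intro i x; rw [hS, sub_mul, keyY, sub_zero, ← mul_assoc, ← pow_succ']
  have keySm : ∀ (m i : ℕ) (x : R), S ^ m * (A ^ i * (Aπ * x)) = A ^ (m + i) * (Aπ * x) := by
    intro m
    induction m with
    | zero => intro i x; simp
    | succ n ih =>
      intro i x
      rw [pow_succ, mul_assoc, keyS, ih]
      have e : n + (i + 1) = n + 1 + i := by omega
      rw [e]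
  have keySAπ : ∀ m : ℕ, S ^ m * Aπ = A ^ m * Aπ := by
    intro m; have h := keySm m 0 1; simpa using h
  have hAeST : Ae * (S * T) = Ae := by
    have h := hSAeT
    rw [mul_assoc (Ae * S), hPT, mul_assoc] at h
    exact h
  have hAπAT : Aπ * (A * T) = 0 := by
    rw [← hPT, ← mul_assoc A, ← hPA, mul_assoc, ← mul_assoc, hAπAe, zero_mul]
  have hST : S * T = Ae - Aπ * (Y * T) := by
    have hsplit : S * T = Ae * (S * T) + Aπ * (S * T) := by rw [hAπ]; noncomm_ring
    rw [hsplit, hAeST, hS, sub_mul, mul_sub, hAπAT, zero_sub]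
    abel
  have hTSAe' : T * S * Ae = Ae := by
    have h := hTSAe
    rw [← mul_assoc, ← mul_assoc, hTP] at h
    exact h
  have hTAAπ : T * (A * Aπ) = 0 := by
    have h := keyT 1 1; simpa using h
  have hTS : T * S = Ae := by
    have hsplit : T * S = T * S * Ae + T * S * Aπ := by rw [hAπ]; noncomm_ring
    rw [hsplit, hTSAe', mul_assoc, hS, sub_mul, hYAπ, sub_zero, hTAAπ, add_zero]
  have hTiS : ∀ i : ℕ, T ^ (i + 2) * S = T ^ (i + 1) := by
    intro i
    rw [pow_succ T (i + 1), mul_assoc, hTS, pow_succ T i, mul_assoc, hTP, ← pow_succ]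
  simp only [mul_assoc] at hX
  set N := ∑ i ∈ Finset.range k, A ^ i * (Aπ * (Y * T ^ (i + 2))) with hN
  set N' := ∑ i ∈ Finset.range k, A ^ i * (Aπ * (Y * T ^ (i + 1))) with hN'
  have hTN : T * N = 0 := by
    rw [hN, Finset.mul_sum]
    exact Finset.sum_eq_zero fun i _ => keyT i _
  have hAeN : Ae * N = 0 := by
    rw [hN, Finset.mul_sum]
    exact Finset.sum_eq_zero fun i _ => key i _
  have hSN : S * N = ∑ i ∈ Finset.range k, A ^ (i + 1) * (Aπ * (Y * T ^ (i + 2))) := by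
    rw [hN, Finset.mul_sum]
    exact Finset.sum_congr rfl fun i _ => keyS i _
  have hNS : N * S = N' := by
    rw [hN, hN', Finset.sum_mul]
    refine Finset.sum_congr rfl fun i _ => ?_
    simp only [mul_assoc]
    rw [hTiS i]
  have hN'T : N' * T = N := by
    rw [hN, hN', Finset.sum_mul]
    refine Finset.sum_congr rfl fun i _ => ?_
    simp only [mul_assoc]
    rw [← pow_succ]
  have hN'N : N' * N = 0 := by
    rw [hN', Finset.sum_mul]
    refine Finset.sum_eq_zero fun i _ => ?_
    simp only [mul_assoc]
    have h : T ^ (i + 1) * N = 0 := by rw [pow_succ, mul_assoc, hTN, mul_zero]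
    rw [h, mul_zero, mul_zero, mul_zero]
  have hkx : ∀ (j : ℕ) (x : R), A ^ (j + k) * (Aπ * x) = 0 := by
    intro j x
    rw [pow_add, mul_assoc, ← mul_assoc (A ^ k), hkA, zero_mul, mul_zero]
  have hSkN' : S ^ k * N' = 0 := by
    rw [hN', Finset.mul_sum]
    refine Finset.sum_eq_zero fun i _ => ?_
    rw [keySm, Nat.add_comm k i]
    exact hkx i _
  have hSkSN : S ^ k * (S * N) = 0 := by
    rw [hSN, Finset.mul_sum]
    refine Finset.sum_eq_zero fun i _ => ?_
    rw [keySm, Nat.add_comm k (i + 1)]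
    exact hkx (i + 1) _
  have hSkAπ : S ^ k * Aπ = 0 := by rw [keySAπ, hkA]
  have hAeX : Ae * X = T := by rw [hX, mul_sub, hPT, hAeN, sub_zero]
  have hN'X : N' * X = N := by rw [hX, mul_sub, hN'T, hN'N, sub_zero]
  have hXS : X * S = Ae - N' := by rw [hX, sub_mul, hTS, hNS]
  have hSX : S * X = Ae - Aπ * (Y * T) - S * N := by rw [hX, mul_sub, hST]
  refine ⟨?_, ?_, ?_⟩
  · rw [hXS, sub_mul, hAeX, hN'X, hX]
  · rw [hSX, hXS, hSN]
    have h0 : A ^ (0 : ℕ) * (Aπ * (Y * T ^ (0 + 1))) = Aπ * (Y * T) := by simp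
    have e1 : ∑ i ∈ Finset.range (k + 1), A ^ i * (Aπ * (Y * T ^ (i + 1)))
        = (∑ i ∈ Finset.range k, A ^ (i + 1) * (Aπ * (Y * T ^ (i + 2))))
          + A ^ (0 : ℕ) * (Aπ * (Y * T ^ (0 + 1))) :=
      Finset.sum_range_succ' _ k
    have e2 : ∑ i ∈ Finset.range (k + 1), A ^ i * (Aπ * (Y * T ^ (i + 1)))
        = N' + A ^ k * (Aπ * (Y * T ^ (k + 1))) :=
      Finset.sum_range_succ _ k
    have hgk : A ^ k * (Aπ * (Y * T ^ (k + 1))) = 0 := by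
      rw [← mul_assoc, hkA, zero_mul]
    have hsum : Aπ * (Y * T) + ∑ i ∈ Finset.range k, A ^ (i + 1) * (Aπ * (Y * T ^ (i + 2))) = N' := by
      rw [← h0, add_comm, ← e1, e2, hgk, add_zero]
    rw [← hsum]
    abel
  · rw [pow_succ, mul_assoc, hSX, mul_sub, mul_sub, hSkSN]
    have h1 : S ^ k * (Aπ * (Y * T)) = 0 := by rw [← mul_assoc, hSkAπ, zero_mul]
    have hSkAe : S ^ k * Ae = S ^ k := by
      have hAe1 : Ae = 1 - Aπ := by rw [hAπ]; abel
      rw [hAe1, mul_sub, mul_one, hSkAπ, sub_zero]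
    rw [h1, hSkAe, sub_zero, sub_zero]

theorem stmt16
    {p q : Type*} [Fintype p] [DecidableEq p] [Fintype q] [DecidableEq q]
    (A AD : Matrix p p ℂ) (D DD : Matrix q q ℂ)
    (B : Matrix q p ℂ) (C : Matrix p q ℂ)
    (hA : IsDrazinInverse A AD) (hD : IsDrazinInverse D DD)
    (Y S Ae Aπ SAe : Matrix p p ℂ)
    (hY : Y = C * DD * B) (hS : S = A - Y)
    (hAe : Ae = A * AD) (hAπ : Aπ = 1 - A * AD)
    (hSAe : SAe = Ae * S * Ae)
    (Z ZD : Matrix q q ℂ) (hZdef : Z = D - B * AD * C)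
    (hZ : IsDrazinInverse Z ZD)
    (K : Matrix p q ℂ) (H : Matrix q p ℂ)
    (hK : K = AD * C) (hH : H = B * AD)
    (T : Matrix p p ℂ) (hT : T = AD + K * ZD * H)
    (hST : SAe * T = A * AD)
    (hcond : Y * Aπ = 0)
    (k : ℕ) (hk : A ^ (k + 1) * AD = A ^ k) :
    IsDrazinInverse S
      (T - ∑ i ∈ Finset.range k, A ^ i * Aπ * Y * T ^ (i + 2)) := by
  obtain ⟨hA1, hA2, -⟩ := hA
  have hAπ' : Aπ = 1 - Ae := by rw [hAπ, hAe]
  have h3 : A * AD * AD = AD := by rw [hA2]; exact hA1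
  have h4 : AD * (A * AD) = AD := by rw [← mul_assoc]; exact hA1
  have hPP : Ae * Ae = Ae := by rw [hAe, mul_assoc, h4]
  have hPA : Ae * A = A * Ae := by rw [hAe, mul_assoc, ← hA2]
  have hPK : Ae * K = K := by rw [hAe, hK, ← Matrix.mul_assoc, h3]
  have hHP : H * Ae = H := by rw [hH, hAe, Matrix.mul_assoc, ← Matrix.mul_assoc AD A AD, hA1]
  have hPT : Ae * T = T := by
    rw [hT, mul_add, ← Matrix.mul_assoc, ← Matrix.mul_assoc, hPK, hAe, h3]
  have hTP : T * Ae = T := by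
    rw [hT, add_mul, Matrix.mul_assoc (K * ZD) H Ae, hHP, hAe, h4]
  have hSAeT' : Ae * S * Ae * T = Ae := by
    have h := hST
    rw [hSAe] at h
    exact h.trans hAe.symm
  have haP : (Ae * S * Ae) * Ae = Ae * S * Ae := by rw [mul_assoc, hPP]
  have hPa : Ae * (Ae * S * Ae) = Ae * S * Ae := by
    rw [← mul_assoc, ← mul_assoc, hPP]
  have hTSAe : T * (Ae * S * Ae) = Ae :=
    corner_comm Ae (Ae * S * Ae) T hPP haP hPa hTP hPT hSAeT'
  have hkA : A ^ k * Aπ = 0 := by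
    rw [hAπ, mul_sub, mul_one, ← mul_assoc, ← pow_succ, hk, sub_self]
  obtain ⟨c1, c2, c3⟩ := drazin_aux_s16 A S T Ae Aπ Y _ hAπ' hPP hPA hPT hTP hcond hS
    hSAeT' hTSAe k hkA rfl
  exact ⟨c1, c2, k, c3⟩
end

section
/- Suppose Z is invertible, A^π*C = 0, B*A^π = 0, and C*D^π*Z^{-1}*B = 0. Then S has a Drazin inverse, given by S^D = A^D + A^D*C*Z^{-1}*B*A^D. -/
open Matrix Finset

theorem pow_mul_eq_pow_mul_of_mul_eq {M : Type*} [Monoid M] {S A Q : M}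
    (h : S * Q = A * Q) (hAQ : Commute A Q) (m : ℕ) : S ^ m * Q = A ^ m * Q := by
  induction m with
  | zero => simp
  | succ m ih =>
    rw [pow_succ, mul_assoc, h, hAQ.eq, ← mul_assoc, ih, mul_assoc, ← hAQ.eq, ← mul_assoc,
      ← pow_succ]

namespace Matrix

variable {n K : Type*} [Fintype n] [DecidableEq n] [Field K] [CharZero K]

theorem eq_zero_of_isIdempotentElem_of_trace_eq_zero {E : Matrix n n K}
    (hE : IsIdempotentElem E) (htr : E.trace = 0) : E = 0 := by
  have h := LinearMap.IsIdempotentElem.eq_zero_of_trace_eq_zero (hE.map Matrix.toLinAlgEquiv')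
    ((trace_toLin'_eq E).trans htr)
  simpa using h

/-- `P - E` is an idempotent of trace zero. -/
theorem eq_of_isIdempotentElem_of_trace_eq {E P : Matrix n n K} (hE : IsIdempotentElem E)
    (hP : IsIdempotentElem P) (hEP : E * P = E) (hPE : P * E = E) (htr : E.trace = P.trace) :
    E = P := by
  have hdiff : IsIdempotentElem (P - E) := by
    rw [IsIdempotentElem, mul_sub, sub_mul, sub_mul, hP.eq, hE.eq, hEP, hPE, sub_self, sub_zero]
  have h0 :=
    eq_zero_of_isIdempotentElem_of_trace_eq_zero hdiff (by rw [trace_sub, htr, sub_self])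
  exact (sub_eq_zero.mp h0).symm

theorem mul_eq_of_mul_eq_of_commute {S X P : Matrix n n K} (hSX : S * X = P) (hXP : X * P = X)
    (hPX : P * X = X) (hSP : Commute S P) : X * S = P := by
  have hP : IsIdempotentElem P := by
    rw [IsIdempotentElem]
    nth_rewrite 1 [← hSX]
    rw [mul_assoc, hXP, hSX]
  have hXSP : X * S * P = X * S := by rw [mul_assoc, hSP.eq, ← mul_assoc, hXP]
  have hXS : IsIdempotentElem (X * S) := by
    rw [IsIdempotentElem, ← mul_assoc, mul_assoc X S X, hSX, hXP]
  refine eq_of_isIdempotentElem_of_trace_eq hXS hP hXSP (by rw [← mul_assoc, hPX]) ?_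
  rw [trace_mul_comm, hSX]

end Matrix

theorem isDrazinInverse_of_mul_eq {n : Type*} [Fintype n] [DecidableEq n]
    {S X P : Matrix n n ℂ} (hSX : S * X = P) (hXS : X * S = P) (hPX : P * X = X) {k : ℕ}
    (hk : S ^ k * (1 - P) = 0) : IsDrazinInverse S X := by
  refine ⟨by rw [hXS, hPX], hSX.trans hXS.symm, k, ?_⟩
  rw [mul_sub, mul_one, sub_eq_zero] at hk
  rw [pow_succ, Matrix.mul_assoc, hSX, ← hk]

section ModifiedMatrix

variable {p q R : Type*} [Fintype p] [Fintype q]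
  {A AD : Matrix p p R} {D DD Z : Matrix q q R} {B : Matrix q p R} {C : Matrix p q R}

theorem commute_modified_mul [Ring R] (hC : A * AD * C = C) (hB : B * (A * AD) = B)
    (hA : Commute A AD) : Commute (A - C * DD * B) (A * AD) :=
  calc (A - C * DD * B) * (A * AD) = A * (A * AD) - C * DD * (B * (A * AD)) := by
        simp only [Matrix.sub_mul, Matrix.mul_assoc]
    _ = A * AD * A - A * AD * C * DD * B := by
        rw [hB, hC, Matrix.mul_assoc A AD A, ← hA.eq]
    _ = A * AD * (A - C * DD * B) := by simp only [Matrix.mul_sub, Matrix.mul_assoc]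

theorem modified_mul_formula_eq [DecidableEq q] [CommRing R] (hC : A * AD * C = C)
    (hD : D * DD = DD * D) (hZ : Z = D - B * AD * C) (hZu : IsUnit Z)
    (h : C * (1 - D * DD) * Z⁻¹ * B = 0) :
    (A - C * DD * B) * (AD + AD * C * Z⁻¹ * B * AD) = A * AD := by
  have hBADC : B * AD * C = D - Z := by rw [hZ, sub_sub_cancel]
  have hZZ : Z * Z⁻¹ = 1 := mul_nonsing_inv Z ((isUnit_iff_isUnit_det Z).mp hZu)
  calc (A - C * DD * B) * (AD + AD * C * Z⁻¹ * B * AD)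
      = A * AD + A * AD * C * Z⁻¹ * B * AD - C * DD * B * AD
          - C * DD * (B * AD * C) * Z⁻¹ * B * AD := by
        simp only [Matrix.sub_mul, Matrix.mul_add, Matrix.mul_assoc]; abel
    _ = A * AD + C * Z⁻¹ * B * AD - C * DD * B * AD - C * DD * (D - Z) * Z⁻¹ * B * AD := by
        rw [hC, hBADC]
    _ = A * AD + C * (1 - D * DD) * Z⁻¹ * B * AD + C * DD * (Z * Z⁻¹) * B * AD
          - C * DD * B * AD := by
        rw [hD]; simp only [Matrix.sub_mul, Matrix.mul_sub, Matrix.mul_one,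
          Matrix.mul_assoc]; abel
    _ = A * AD := by rw [h, hZZ]; simp

end ModifiedMatrix

theorem stmt18
    {p q : Type*} [Fintype p] [DecidableEq p] [Fintype q] [DecidableEq q]
    (A AD : Matrix p p ℂ) (D DD : Matrix q q ℂ)
    (B : Matrix q p ℂ) (C : Matrix p q ℂ)
    (hA : IsDrazinInverse A AD) (hD : IsDrazinInverse D DD)
    (S : Matrix p p ℂ) (hS : S = A - C * DD * B)
    (Z : Matrix q q ℂ) (hZdef : Z = D - B * AD * C)
    (hZinv : IsUnit Z)
    (Aπ : Matrix p p ℂ) (Dπ : Matrix q q ℂ)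
    (hAπ : Aπ = 1 - A * AD) (hDπ : Dπ = 1 - D * DD)
    (h1 : Aπ * C = 0) (h2 : B * Aπ = 0) (h3 : C * Dπ * Z⁻¹ * B = 0) :
    IsDrazinInverse S (AD + AD * C * Z⁻¹ * B * AD) := by
  obtain ⟨hADA, hAcomm, k, hAk⟩ := hA
  obtain ⟨-, hDcomm, -⟩ := hD
  subst hS hAπ hDπ
  have hPC : A * AD * C = C := by
    rw [Matrix.sub_mul, Matrix.one_mul, sub_eq_zero] at h1; exact h1.symm
  have hBP : B * (A * AD) = B := by
    rw [Matrix.mul_sub, Matrix.mul_one, sub_eq_zero] at h2; exact h2.symm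
  have hADP : AD * (A * AD) = AD := by rw [← Matrix.mul_assoc, hADA]
  have hPAD : A * AD * AD = AD := by rw [hAcomm, Matrix.mul_assoc, hADP]
  set X := AD + AD * C * Z⁻¹ * B * AD
  have hSX : (A - C * DD * B) * X = A * AD := modified_mul_formula_eq hPC hDcomm hZdef hZinv h3
  have hXP : X * (A * AD) = X := by simp only [X, Matrix.add_mul, Matrix.mul_assoc, hADP]
  have hPX : A * AD * X = X := by simp only [X, Matrix.mul_add, ← Matrix.mul_assoc, hPAD]
  have hXS := mul_eq_of_mul_eq_of_commute hSX hXP hPX (commute_modified_mul hPC hBP hAcomm)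
  refine isDrazinInverse_of_mul_eq hSX hXS hPX (k := k) ?_
  have hSπ : (A - C * DD * B) * (1 - A * AD) = A * (1 - A * AD) := by
    rw [Matrix.sub_mul, Matrix.mul_assoc (C * DD), h2, Matrix.mul_zero, sub_zero]
  rw [pow_mul_eq_pow_mul_of_mul_eq hSπ
    ((Commute.one_right A).sub_right ((Commute.refl A).mul_right hAcomm)),
    Matrix.mul_sub, Matrix.mul_one, ← Matrix.mul_assoc, ← pow_succ, hAk, sub_self]
end

section
/- Suppose Z*D^π*R = 0 and let l be a natural number with D^(l+1)*D^D = D^l (so l is at least the index of D). Then Z has a Drazin inverse, given by Z^D = Σ_{i=0}^{l−1} (W^{i+2} − D^π*R*W^{i+3})*Z*D^π*D^i + W − D^π*R*W^2. -/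
open Matrix Finset

namespace DrazinAux
variable {R : Type*} [Ring R]

lemma idem_pow {a : R} (h : a * a = a) : ∀ n, a ^ (n + 1) = a
  | 0 => pow_one a
  | n+1 => by rw [pow_succ, idem_pow h n, h]

lemma shift {M X : R} {j : ℕ} (h3 : M ^ (j+1) * X = M ^ j) (i : ℕ) :
    M ^ (j + i + 1) * X = M ^ (j + i) := by
  rw [show j + i + 1 = i + (j+1) by omega, pow_add, mul_assoc, h3, ← pow_add,
    show i + j = j + i by omega]

lemma X_pow {M X : R} (h1 : X * M * X = X) (h2 : M * X = X * M) :
    ∀ n, X ^ (n+1) * M ^ n = X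
  | 0 => by rw [pow_one, pow_zero, mul_one]
  | n+1 => by
      have : X ^ (n+2) * M ^ (n+1) = X * (X ^ (n+1) * M ^ n) * M := by
        rw [pow_succ' X (n+1), pow_succ M n]
        noncomm_ring
      rw [this, X_pow h1 h2 n, mul_assoc, ← h2, ← mul_assoc, h1]

lemma pow_Y {M Y : R} (h1 : Y * M * Y = Y) (h2 : M * Y = Y * M) :
    ∀ n, M ^ n * Y ^ (n+1) = Y
  | 0 => by rw [pow_one, pow_zero, one_mul]
  | n+1 => by
      have : M ^ (n+1) * Y ^ (n+2) = M * (M ^ n * Y ^ (n+1)) * Y := by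
        rw [pow_succ' M n, pow_succ Y (n+1)]
        noncomm_ring
      rw [this, pow_Y h1 h2 n, h2, h1]

lemma unique {M X Y : R} (hX1 : X * M * X = X) (hX2 : M * X = X * M)
    {j : ℕ} (hX3 : M ^ (j+1) * X = M ^ j)
    (hY1 : Y * M * Y = Y) (hY2 : M * Y = Y * M)
    {k : ℕ} (hY3 : M ^ (k+1) * Y = M ^ k) : X = Y := by
  set m := j + k + 1 with hm
  have key1 : M ^ (m+1) * Y = M ^ m := by
    have := shift hY3 (j+1); rwa [show k + (j+1) + 1 = m + 1 by omega,
      show k + (j+1) = m by omega] at this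
  have key2 : M ^ (m+1) * X = M ^ m := by
    have := shift hX3 (k+1); rwa [show j + (k+1) + 1 = m + 1 by omega,
      show j + (k+1) = m by omega] at this
  have cXM : Commute X M := hX2.symm
  have cMY : Commute M Y := hY2
  have idXM : (X * M) ^ (m+1) = X * M :=
    idem_pow (by rw [← mul_assoc, hX1]) m
  have idMY : (M * Y) ^ (m+1) = M * Y :=
    idem_pow (by rw [mul_assoc M Y (M*Y), ← mul_assoc Y M Y, hY1]) m
  have e1 : X = X * M * Y := by
    conv_lhs => rw [← X_pow hX1 hX2 m, ← key1, ← mul_assoc, ← cXM.mul_pow (m+1), idXM]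
  have e2 : Y = X * M * Y := by
    conv_lhs => rw [← pow_Y hY1 hY2 m, ← key2, ← (cXM.pow_right (m+1)).eq, mul_assoc,
      ← cMY.mul_pow (m+1), idMY, ← mul_assoc]
  rw [e1, ← e2]

lemma pow_mul_right_absorb {M e : R} (hMe : M * e = M) (n : ℕ) :
    M ^ (n+1) * e = M ^ (n+1) := by
  rw [pow_succ, mul_assoc, hMe]

lemma corner {M X e : R} (heM : e * M = M) (hMe : M * e = M)
    (h1 : X * M * X = X) (h2 : M * X = X * M) {j : ℕ} (h3 : M ^ (j+1) * X = M ^ j) :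
    (e * X * e) * M * (e * X * e) = e * X * e ∧
    M * (e * X * e) = (e * X * e) * M ∧
    M ^ (j+1+1) * (e * X * e) = M ^ (j+1) := by
  refine ⟨?_, ?_, ?_⟩
  · calc (e * X * e) * M * (e * X * e) = e * X * (e * M * e) * X * e := by noncomm_ring
    _ = e * (X * M * X) * e := by rw [heM, hMe]; noncomm_ring
    _ = e * X * e := by rw [h1]
  · calc M * (e * X * e) = (M * e) * X * e := by noncomm_ring
    _ = X * M * e := by rw [hMe, h2]
    _ = (e * M) * X * e := by rw [heM, h2]
    _ = e * X * M * e := by rw [mul_assoc e M X, h2, ← mul_assoc]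
    _ = e * X * M := by rw [mul_assoc (e*X) M e, hMe]
    _ = (e * X * e) * M := by rw [mul_assoc (e*X) e M, heM]
  · calc M ^ (j+2) * (e * X * e) = (M ^ (j+2) * e) * X * e := by noncomm_ring
    _ = M ^ (j+2) * X * e := by rw [pow_mul_right_absorb hMe]
    _ = (M * (M ^ (j+1) * X)) * e := by rw [← mul_assoc, ← pow_succ']
    _ = M ^ (j+1) * e := by rw [h3, ← pow_succ']
    _ = M ^ (j+1) := pow_mul_right_absorb hMe j

lemma qpow_mul {Q P : R} (hQP : Q * P = 0) : ∀ {n : ℕ}, n ≠ 0 → Q ^ n * P = 0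
  | 0, h => absurd rfl h
  | n+1, _ => by rw [pow_succ, mul_assoc, hQP, mul_zero]

lemma binom {P Q : R} (hQP : Q * P = 0) :
    ∀ n, (P + Q) ^ n = ∑ b ∈ range (n+1), P ^ (n - b) * Q ^ b
  | 0 => by simp
  | n+1 => by
    rw [pow_succ, binom hQP n, sum_mul]
    have expand : ∀ b ∈ range (n+1),
        P ^ (n - b) * Q ^ b * (P + Q) = P ^ (n - b) * Q ^ b * P + P ^ (n-b) * Q ^ (b+1) := by
      intro b _
      rw [mul_add]
      congr 1
      rw [mul_assoc, ← pow_succ]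
    rw [sum_congr rfl expand, sum_add_distrib]
    have h1 : ∑ b ∈ range (n+1), P ^ (n - b) * Q ^ b * P = P ^ (n+1) := by
      rw [Finset.sum_eq_single_of_mem 0 (by simp)]
      · simp [pow_succ]
      · intro b _ hb
        obtain ⟨c, rfl⟩ := Nat.exists_eq_succ_of_ne_zero hb
        rw [mul_assoc, qpow_mul hQP (Nat.succ_ne_zero c), mul_zero]
    rw [h1, sum_range_succ' (fun b => P ^ (n + 1 - b) * Q ^ b) (n+1)]
    simp only [Nat.succ_sub_succ, Nat.sub_zero, pow_zero, mul_one]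
    rw [add_comm]

lemma add_drazin {P Q Y : R} (h1 : Y * P * Y = Y) (h2 : P * Y = Y * P)
    {k : ℕ} (h3 : P ^ (k+1) * Y = P ^ k) {t : ℕ} (ht : Q ^ (t+1) = 0) (hQP : Q * P = 0) :
    (∑ n ∈ range (t+1), Y^(n+1) * Q^n) * (P+Q) * (∑ n ∈ range (t+1), Y^(n+1) * Q^n)
      = ∑ n ∈ range (t+1), Y^(n+1) * Q^n ∧
    (P+Q) * (∑ n ∈ range (t+1), Y^(n+1) * Q^n)
      = (∑ n ∈ range (t+1), Y^(n+1) * Q^n) * (P+Q) ∧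
    (P+Q) ^ (k+t+1+1) * (∑ n ∈ range (t+1), Y^(n+1) * Q^n) = (P+Q) ^ (k+t+1) := by
  set X : R := ∑ n ∈ range (t+1), Y^(n+1) * Q^n with hXdef
  have hPY2 : P * Y * Y = Y := by rw [h2, h1]
  have hQY : Q * Y = 0 := by
    conv_lhs => rw [← hPY2]
    rw [← mul_assoc, ← mul_assoc, hQP, zero_mul, zero_mul]
  have hQYpow : ∀ n : ℕ, Q * Y ^ (n+1) = 0 := by
    intro n; rw [pow_succ' Y n, ← mul_assoc, hQY, zero_mul]
  have hPYpow : ∀ n : ℕ, P * Y ^ (n+2) = Y ^ (n+1) := by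
    intro n
    rw [pow_succ' Y (n+1), pow_succ' Y n, ← mul_assoc, ← mul_assoc, hPY2, ← pow_succ']
  have hYPY : ∀ n : ℕ, Y * P * Y ^ (n+1) = Y ^ (n+1) := by
    intro n; rw [pow_succ' Y n, ← mul_assoc, h1, ← pow_succ']
  have hQX : Q * X = 0 := by
    rw [hXdef, mul_sum]
    refine Finset.sum_eq_zero fun n _ => ?_
    rw [← mul_assoc, hQYpow n, zero_mul]
  have hQpowX : ∀ n : ℕ, Q ^ (n+1) * X = 0 := by
    intro n; rw [pow_succ, mul_assoc, hQX, mul_zero]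
  have hXP : X * P = Y * P := by
    rw [hXdef, sum_mul, Finset.sum_eq_single_of_mem 0 (mem_range.mpr (Nat.succ_pos t))]
    · simp
    · intro b _ hb
      rw [mul_assoc, qpow_mul hQP hb, mul_zero]
  have hXQ : X * Q = ∑ n ∈ range (t+1), Y^(n+1) * Q^(n+1) := by
    rw [hXdef, sum_mul]
    exact Finset.sum_congr rfl fun n _ => by rw [mul_assoc, ← pow_succ]
  have hcomm : (P + Q) * X = X * (P + Q) := by
    rw [mul_add X, add_mul P Q X, hQX, add_zero, hXP, hXQ, hXdef, mul_sum]
    rw [sum_range_succ' (fun n => P * (Y ^ (n+1) * Q ^ n)) t,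
        sum_range_succ (fun n => Y ^ (n+1) * Q ^ (n+1)) t, ht, mul_zero, add_zero]
    have : ∀ i ∈ range t, P * (Y ^ (i+1+1) * Q ^ (i+1)) = Y ^ (i+1) * Q ^ (i+1) := by
      intro i _; rw [← mul_assoc, hPYpow i]
    rw [sum_congr rfl this]
    simp [h2, add_comm]
  have hinner : X * (P + Q) * X = X := by
    rw [mul_add X, hXP, hXQ, add_mul, sum_mul]
    have z : ∑ n ∈ range (t+1), Y ^ (n+1) * Q ^ (n+1) * X = 0 := by
      refine Finset.sum_eq_zero fun n _ => ?_
      rw [mul_assoc, hQpowX n, mul_zero]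
    rw [z, add_zero, hXdef, mul_sum]
    refine Finset.sum_congr rfl fun n _ => ?_
    rw [← mul_assoc, hYPY n]
  refine ⟨hinner, hcomm, ?_⟩
  have L : ∀ i n : ℕ, P ^ (k + n + i + 1) * Y ^ (n+1) = P ^ (k + i) := by
    intro i n
    induction n with
    | zero => simpa using shift h3 i
    | succ n ih =>
        rw [pow_succ' Y (n+1), ← mul_assoc,
          show k + (n+1) + i + 1 = (k + (i + n + 1)) + 1 by omega]
        have := shift h3 (i + n + 1)
        rw [this, show k + (i + n + 1) = k + n + i + 1 by omega, ih]
  have hQbig : ∀ b : ℕ, t + 1 ≤ b → Q ^ b = 0 := by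
    intro b hb
    rw [show b = (t+1) + (b - (t+1)) by omega, pow_add, ht, zero_mul]
  set m := k + t + 1 with hm
  have lhs1 : (P + Q) ^ (m+1) * X = P ^ (m+1) * X := by
    rw [binom hQP (m+1), sum_mul,
      Finset.sum_eq_single_of_mem 0 (mem_range.mpr (Nat.succ_pos (m+1)))]
    · simp
    · intro b _ hb
      obtain ⟨c, rfl⟩ := Nat.exists_eq_succ_of_ne_zero hb
      rw [mul_assoc, hQpowX c, mul_zero]
  have lhs2 : P ^ (m+1) * X = ∑ n ∈ range (t+1), P ^ (m - n) * Q ^ n := by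
    rw [hXdef, mul_sum]
    refine Finset.sum_congr rfl fun n hn => ?_
    have hnt : n ≤ t := by simpa [Nat.lt_succ_iff] using hn
    rw [← mul_assoc, show m + 1 = k + n + (t - n + 1) + 1 by omega, L (t - n + 1) n,
      show k + (t - n + 1) = m - n by omega]
  have rhs : (P + Q) ^ m = ∑ n ∈ range (t+1), P ^ (m - n) * Q ^ n := by
    rw [binom hQP m]
    refine (Finset.sum_subset ?_ ?_).symm
    · exact Finset.range_subset_range.mpr (by omega)
    · intro b _ hb
      have : t + 1 ≤ b := by simpa [Nat.lt_succ_iff] using hb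
      rw [hQbig b this, mul_zero]
  rw [lhs1, lhs2, rhs]

end DrazinAux

theorem stmt19
    {p q : Type*} [Fintype p] [DecidableEq p] [Fintype q] [DecidableEq q]
    (A AD : Matrix p p ℂ) (D DD : Matrix q q ℂ)
    (B : Matrix q p ℂ) (C : Matrix p q ℂ)
    (hA : IsDrazinInverse A AD) (hD : IsDrazinInverse D DD)
    (R Z De Dπ ZDe : Matrix q q ℂ)
    (hR : R = B * AD * C) (hZdef : Z = D - R)
    (hDe : De = D * DD) (hDπ : Dπ = 1 - D * DD)
    (hZDe : ZDe = De * Z * De)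
    (W : Matrix q q ℂ) (hW : IsDrazinInverse ZDe W)
    (hcond : Z * Dπ * R = 0)
    (l : ℕ) (hl : D ^ (l + 1) * DD = D ^ l) :
    IsDrazinInverse Z
      ((∑ i ∈ Finset.range l,
          (W ^ (i + 2) - Dπ * R * W ^ (i + 3)) * Z * Dπ * D ^ i)
        + W - Dπ * R * W ^ 2) := by
  obtain ⟨hD1, hD2, -⟩ := hD
  obtain ⟨hW1, hW2, k, hW3⟩ := hW
  have hDπe : Dπ = 1 - De := by rw [hDπ, hDe]
  have he : De * De = De := by rw [hDe, mul_assoc, ← mul_assoc DD D DD, hD1]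
  have heD : De * D = D * De := by rw [hDe, mul_assoc, ← hD2, ← mul_assoc]
  have hfD : Dπ * D = D * Dπ := by
    rw [hDπe, sub_mul, one_mul, heD, mul_sub, mul_one]
  have hef : De * Dπ = 0 := by rw [hDπe, mul_sub, mul_one, he, sub_self]
  have hfe : Dπ * De = 0 := by rw [hDπe, sub_mul, one_mul, he, sub_self]
  have hff : Dπ * Dπ = Dπ := by
    nth_rewrite 1 [hDπe]
    rw [sub_mul, one_mul, hef, sub_zero]
  have hsum : De + Dπ = 1 := by rw [hDπe]; abel
  have hDlf : D ^ l * Dπ = 0 := by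
    rw [hDπe, hDe, mul_sub, mul_one, ← mul_assoc, ← pow_succ, hl, sub_self]
  have hfDpow : ∀ n : ℕ, Dπ * D ^ n = D ^ n * Dπ := fun n => (Commute.pow_right (hfD : Commute Dπ D) n).eq
  -- absorption for ZDe
  have heM : De * ZDe = ZDe := by
    rw [hZDe, ← mul_assoc, ← mul_assoc, he]
  have hMe : ZDe * De = ZDe := by rw [hZDe, mul_assoc, he]
  -- W is "corner": W = De * W * De
  obtain ⟨c1, c2, c3⟩ := DrazinAux.corner heM hMe hW1 hW2 hW3
  have hWeq : W = De * W * De := DrazinAux.unique hW1 hW2 hW3 c1 c2 c3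
  have heW : De * W = W := by
    conv_lhs => rw [hWeq, ← mul_assoc, ← mul_assoc, he]
    rw [← hWeq]
  have hWe : W * De = W := by
    conv_lhs => rw [hWeq, mul_assoc, he]
    rw [← hWeq]
  have hWf : W * Dπ = 0 := by rw [hDπe, mul_sub, mul_one, hWe, sub_self]
  have hWpow_f : ∀ n : ℕ, W ^ (n+1) * Dπ = 0 := by
    intro n; rw [pow_succ, mul_assoc, hWf, mul_zero]
  -- Z relations
  have hZD : Z - D = -R := by rw [hZdef]; abel
  have hZfZ : Z * Dπ * Z = Z * Dπ * D := by
    rw [← sub_eq_zero]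
    calc Z * Dπ * Z - Z * Dπ * D = Z * Dπ * (Z - D) := by noncomm_ring
    _ = -(Z * Dπ * R) := by rw [hZD]; noncomm_ring
    _ = 0 := by rw [hcond, neg_zero]
  have hQP : Z * Dπ * (Z * De) = 0 := by
    rw [← mul_assoc, hZfZ, mul_assoc (Z*Dπ) D De, ← heD, ← mul_assoc,
      mul_assoc Z Dπ De, hfe, mul_zero, zero_mul]
  have hQpow : ∀ n : ℕ, (Z * Dπ) ^ (n+1) = Z * Dπ * D ^ n := by
    intro n
    induction n with
    | zero => rw [pow_one, pow_zero, mul_one]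
    | succ n ih =>
      calc (Z*Dπ) ^ (n+2) = (Z*Dπ) * (Z*Dπ)^(n+1) := pow_succ' _ _
      _ = (Z * Dπ * Z) * (Dπ * D^n) := by rw [ih]; noncomm_ring
      _ = (Z * Dπ * D) * (Dπ * D^n) := by rw [hZfZ]
      _ = Z * ((Dπ * D) * Dπ) * D^n := by noncomm_ring
      _ = Z * ((D * Dπ) * Dπ) * D^n := by rw [hfD]
      _ = Z * (D * Dπ) * D^n := by rw [mul_assoc D Dπ Dπ, hff]
      _ = Z * (Dπ * D) * D^n := by rw [hfD]
      _ = Z * Dπ * D^(n+1) := by rw [pow_succ' D n]; noncomm_ring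
  have hQt : (Z * Dπ) ^ (l+1) = 0 := by
    rw [hQpow l, mul_assoc, hfDpow l, ← mul_assoc, mul_assoc Z (D^l) Dπ, hDlf, mul_zero]
  -- Drazin axioms for P = Z * De with Y = W - Dπ * R * W^2
  have hWZe : W * (Z * De) = W * ZDe := by
    conv_lhs => rw [← hWe]
    rw [hZDe]
    noncomm_ring
  have hMf : ZDe * Dπ = 0 := by rw [hZDe, mul_assoc, hef, mul_zero]
  have hMpow_f : ∀ n : ℕ, ZDe ^ (n+1) * Dπ = 0 := by
    intro n; rw [pow_succ, mul_assoc, hMf, mul_zero]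
  have hfZDe : Dπ * Z * De = -(Dπ * R * De) := by
    rw [hZdef, mul_sub, sub_mul, hfD, mul_assoc D Dπ De, hfe, mul_zero, zero_sub]
  have hPY : (Z * De) * (W - Dπ * R * W^2) = ZDe * W - Dπ * R * W := by
    calc (Z * De) * (W - Dπ * R * W^2)
        = Z * De * W - Z * (De * Dπ) * (R * W^2) := by noncomm_ring
      _ = Z * De * W := by rw [hef, mul_zero, zero_mul, sub_zero]
      _ = (De + Dπ) * (Z * De * W) := by rw [hsum, one_mul]
      _ = (De * Z * De) * W + (Dπ * Z * De) * W := by noncomm_ring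
      _ = ZDe * W + -(Dπ * R * De) * W := by rw [← hZDe, hfZDe]
      _ = ZDe * W - Dπ * R * (De * W) := by noncomm_ring
      _ = ZDe * W - Dπ * R * W := by rw [heW]
  have hYP : (W - Dπ * R * W^2) * (Z * De) = ZDe * W - Dπ * R * W := by
    have hWWZ : W * W * ZDe = W := by
      rw [mul_assoc, ← hW2, ← mul_assoc, hW1]
    calc (W - Dπ * R * W^2) * (Z * De)
        = W * (Z * De) - Dπ * R * (W * (W * (Z * De))) := by noncomm_ring
      _ = W * ZDe - Dπ * R * (W * (W * ZDe)) := by rw [hWZe]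
      _ = W * ZDe - Dπ * R * (W * W * ZDe) := by rw [← mul_assoc W W ZDe]
      _ = ZDe * W - Dπ * R * W := by rw [hWWZ, hW2]
  have hcomm2 : (Z * De) * (W - Dπ * R * W^2) = (W - Dπ * R * W^2) * (Z * De) := by
    rw [hPY, hYP]
  have hYPY : (W - Dπ * R * W^2) * (Z * De) * (W - Dπ * R * W^2) = W - Dπ * R * W^2 := by
    rw [hYP]
    have hZWW : ZDe * W * W = W := by rw [hW2, hW1]
    calc (ZDe * W - Dπ * R * W) * (W - Dπ * R * W^2)
        = ZDe * W * W - ZDe * (W * Dπ) * (R * W^2) - Dπ * R * (W * W)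
            + Dπ * R * ((W * Dπ) * (R * W^2)) := by noncomm_ring
      _ = W - Dπ * R * W^2 := by
          simp only [hWf, mul_zero, zero_mul, sub_zero, add_zero]
          rw [hZWW, ← pow_two]
  -- powers of P = Z * De
  have habs : ∀ n : ℕ, ZDe^(n+1) * (Z * De) = ZDe^(n+1+1) := by
    intro n
    conv_lhs => rw [← DrazinAux.pow_mul_right_absorb hMe n]
    rw [mul_assoc, ← mul_assoc De Z De, ← hZDe, ← pow_succ]
  have hPpow : ∀ n : ℕ, (Z * De)^(n+2) = Z * ZDe^(n+1) := by
    intro n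
    induction n with
    | zero =>
      rw [pow_two, pow_one, mul_assoc, ← mul_assoc De Z De, ← hZDe]
    | succ n ih =>
      rw [show n+1+2 = n+2+1 by omega, pow_succ, ih, mul_assoc, habs n]
  have hP3 : (Z * De)^(k+2+1) * (W - Dπ * R * W^2) = (Z * De)^(k+2) := by
    have h5 : ZDe^(k+1+1) * W = ZDe^(k+1) := DrazinAux.shift hW3 1
    calc (Z * De)^(k+2+1) * (W - Dπ * R * W^2)
        = (Z * ZDe^(k+1+1)) * (W - Dπ * R * W^2) := by
          rw [show k+2+1 = (k+1)+2 by omega, hPpow (k+1)]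
      _ = Z * (ZDe^(k+1+1) * W) - Z * ((ZDe^(k+1+1) * Dπ) * (R * W^2)) := by noncomm_ring
      _ = Z * ZDe^(k+1) := by rw [h5, hMpow_f (k+1), zero_mul, mul_zero, sub_zero]
      _ = (Z * De)^(k+2) := by rw [← hPpow k]
  -- powers of Y = W - Dπ * R * W^2
  have hYpow : ∀ n : ℕ, (W - Dπ * R * W^2)^(n+1) = W^(n+1) - Dπ * R * W^(n+2) := by
    intro n
    induction n with
    | zero => simp
    | succ n ih =>
      have h6 : W^(n+2) * Dπ = 0 := by
        rw [show n+2 = n+1+1 by omega]; exact hWpow_f (n+1)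
      rw [pow_succ, ih]
      calc (W^(n+1) - Dπ * R * W^(n+2)) * (W - Dπ * R * W^2)
          = W^(n+1) * W - (W^(n+1) * Dπ) * (R * W^2) - Dπ * R * (W^(n+2) * W)
              + Dπ * R * ((W^(n+2) * Dπ) * (R * W^2)) := by noncomm_ring
        _ = W^(n+1+1) - Dπ * R * W^(n+1+2) := by
            simp only [hWpow_f n, h6, zero_mul, mul_zero, sub_zero, add_zero]
            rw [← pow_succ, ← pow_succ, show n+2+1 = n+1+2 by omega]
  -- assemble
  have hPQ : Z * De + Z * Dπ = Z := by rw [← mul_add, hsum, mul_one]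
  obtain ⟨a1, a2, a3⟩ := DrazinAux.add_drazin hYPY hcomm2 hP3 hQt hQP
  rw [hPQ] at a1 a2 a3
  have hXeq : (∑ i ∈ Finset.range l,
          (W ^ (i + 2) - Dπ * R * W ^ (i + 3)) * Z * Dπ * D ^ i)
        + W - Dπ * R * W ^ 2
      = ∑ n ∈ range (l+1), (W - Dπ * R * W^2)^(n+1) * (Z * Dπ)^n := by
    rw [sum_range_succ' (fun n => (W - Dπ * R * W^2)^(n+1) * (Z * Dπ)^n) l]
    have hterm : ∀ i ∈ range l, (W - Dπ * R * W^2)^(i+1+1) * (Z * Dπ)^(i+1)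
        = (W ^ (i + 2) - Dπ * R * W ^ (i + 3)) * Z * Dπ * D ^ i := by
      intro i _
      rw [hQpow i, hYpow (i+1), show i+1+1 = i+2 by omega, show i+1+2 = i+3 by omega]
      noncomm_ring
    rw [sum_congr rfl hterm, pow_one, pow_zero, mul_one, add_sub_assoc]
  rw [hXeq]
  exact ⟨a1, a2, ⟨k+2+l+1, a3⟩⟩
end
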